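/- arXiv:1904.04942 — 10 statements merged into one kernel-verified Lean document; each statement's English description precedes it below -/
import Mathlib

section
/- Let F be a nonzero formal power series with complex coefficients that is algebraic over the field of rational functions ℂ(z), i.e. there exists a nonzero polynomial P(z,T) with coefficients in ℂ[z] such that P(z,F) = 0 in ℂ⟦z⟧. Then the following are equivalent: (1) F is root-rational, i.e. there exist an integer t ≥ 1 and polynomials A, B ∈ ℂ[z] with B ≠ 0 such that B·F^t = A in ℂ⟦z⟧; (2) F satisfies a first-order homogeneous linear differential equation over ℂ(z), i.e. there exist polynomials A, B ∈ ℂ[z] with B ≠ 0 such that B·F' = A·F, where F' is the formal derivative of F. -/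
/-!
If `B F^t = A`, logarithmic differentiation gives `t A B F' = (A' B - A B') F`.

Conversely, let `B F' = A F` and let `P₀ = a_n T^n + ⋯ + a_0` be a nonzero polynomial over `ℂ[z]`
of least degree with `P₀(F) = 0`. The derivation `δ` of `ℂ[z][T]` acting as `B • d/dz` on
coefficients with `δ T = A T` satisfies `(δ Q)(F) = B · Q(F)'`, so `δ P₀` annihilates `F` too, and
minimality forces `a_n · δ P₀ = (δ P₀)_n · P₀`. The constant terms give
`a_n B a_0' = (B a_n' + n A a_n) a_0`, i.e. `a_n F^n` and `a_0` have vanishing Wronskian; since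
`a_0 ≠ 0` (as `F ≠ 0`), `a_n F^n` is a constant multiple of `a_0`.
-/

theorem Derivation.mul_apply_pow_of_mul_apply_eq {R A : Type*} [CommSemiring R] [CommRing A]
    [Algebra R A] (D : Derivation R A A) {a b c : A} (h : b * D a = c * a) (n : ℕ) :
    b * D (a ^ n) = n * c * a ^ n := by
  rcases n with _ | n
  · simp
  · rw [D.leibniz_pow, Nat.add_sub_cancel, smul_eq_mul, nsmul_eq_mul, pow_succ]
    linear_combination (↑(n + 1) * a ^ n) * h

namespace PowerSeries

theorem coeff_X_mul_derivative {R : Type*} [CommSemiring R] (f : R⟦X⟧) (m : ℕ) :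
    coeff m (X * d⁄dX R f) = m * coeff m f := by
  rcases m with _ | m
  · simp
  · rw [coeff_succ_X_mul, coeff_derivative]
    push_cast
    ring

variable {k : Type*} [Field k] [CharZero k]

theorem eq_C_mul_X_pow_of_X_mul_derivative_eq {f : k⟦X⟧} {n : ℕ}
    (h : X * d⁄dX k f = (n : k⟦X⟧) * f) : f = C (coeff n f) * X ^ n := by
  ext m
  have hm : ((m : k) - n) * coeff m f = 0 := by
    have := congrArg (coeff m) h
    rw [coeff_X_mul_derivative, ← map_natCast (C (R := k)), coeff_C_mul] at this
    linear_combination this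
  rw [coeff_C_mul_X_pow]
  split_ifs with hmn
  · rw [hmn]
  · exact (mul_eq_zero.mp hm).resolve_left (sub_ne_zero.mpr (Nat.cast_injective.ne hmn))

theorem exists_eq_C_mul_of_derivative_mul_eq {u v : k⟦X⟧} (hv : v ≠ 0)
    (h : d⁄dX k u * v = u * d⁄dX k v) : ∃ c, u = C c * v := by
  set b := v.order.toNat
  set e := v.divXPowOrder
  obtain ⟨g, hg⟩ := (isUnit_divided_by_X_pow_order hv).exists_right_inv
  set w := u * g
  have hu : u = w * e := by rw [mul_assoc, mul_comm g, hg, mul_one]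
  have hve : v = X ^ b * e := X_pow_order_mul_divXPowOrder.symm
  have hX : (X : k⟦X⟧) * d⁄dX k X = 1 * X := by simp
  have hXb : X * d⁄dX k (X ^ b) = (b : k⟦X⟧) * X ^ b := by
    simpa using (d⁄dX k).mul_apply_pow_of_mul_apply_eq hX b
  -- with `v = X^b e`, `e` a unit, and `u = w e`, the hypothesis becomes `X w' = b w`
  have hw : X ^ b * e ^ 2 * (X * d⁄dX k w - (b : k⟦X⟧) * w) = 0 := by
    rw [hu, hve] at h
    simp only [Derivation.leibniz, smul_eq_mul] at h
    linear_combination X * h + (w * e ^ 2) * hXb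
  have he : e ≠ 0 := (isUnit_divided_by_X_pow_order hv).ne_zero
  have hw' : X * d⁄dX k w = (b : k⟦X⟧) * w :=
    sub_eq_zero.mp ((mul_eq_zero.mp hw).resolve_left (by simp [he, X_ne_zero]))
  refine ⟨coeff b w, ?_⟩
  calc u = w * e := hu
    _ = C (coeff b w) * X ^ b * e := by rw [← eq_C_mul_X_pow_of_X_mul_derivative_eq hw']
    _ = C (coeff b w) * v := by rw [hve, mul_assoc]

end PowerSeries

namespace Polynomial

variable {R : Type*} [CommRing R]

section LeastDegree

variable {S : Type*} [CommRing S]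

structure IsLeastDegreeInKer (φ : R[X] →+* S) (P : R[X]) : Prop where
  ne_zero : P ≠ 0
  map_eq_zero : φ P = 0
  eq_zero_of_degree_lt : ∀ Q, φ Q = 0 → Q.degree < P.degree → Q = 0

namespace IsLeastDegreeInKer

variable {φ : R[X] →+* S} {P : R[X]}

theorem exists_of_map_eq_zero (hP : P ≠ 0) (hφP : φ P = 0) :
    ∃ P₀, IsLeastDegreeInKer φ P₀ := by
  obtain ⟨P₀, ⟨hne, hφ⟩, hmin⟩ :=
    (InvImage.wf degree wellFounded_lt).has_min {Q | Q ≠ 0 ∧ φ Q = 0} ⟨P, hP, hφP⟩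
  exact ⟨P₀, hne, hφ, fun Q hQ hlt => by_contra fun hQ0 => hmin Q ⟨hQ0, hQ⟩ hlt⟩

theorem C_leadingCoeff_mul_eq (hP : IsLeastDegreeInKer φ P) {Q : R[X]} (hQ : φ Q = 0)
    (hdeg : Q.natDegree ≤ P.natDegree) :
    C P.leadingCoeff * Q = C (Q.coeff P.natDegree) * P := by
  refine sub_eq_zero.mp (hP.eq_zero_of_degree_lt _ (by simp [hQ, hP.map_eq_zero]) ?_)
  rw [degree_eq_natDegree hP.ne_zero, degree_lt_iff_coeff_zero]
  intro m hm
  rcases (show P.natDegree ≤ m by exact_mod_cast hm).eq_or_lt with heq | hlt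
  · rw [← heq, coeff_sub, coeff_C_mul, coeff_C_mul, coeff_natDegree, mul_comm, sub_self]
  · simp [coeff_C_mul, coeff_eq_zero_of_natDegree_lt hlt,
      coeff_eq_zero_of_natDegree_lt (hdeg.trans_lt hlt)]

theorem natDegree_pos (hP : IsLeastDegreeInKer φ P) (hC : Function.Injective (φ.comp C)) :
    0 < P.natDegree := by
  refine Nat.pos_of_ne_zero fun h0 => hP.ne_zero ?_
  rw [eq_C_of_natDegree_eq_zero h0] at hP ⊢
  exact C_eq_zero.mpr (hC (by simpa using hP.map_eq_zero))

theorem coeff_zero_ne_zero [IsDomain S] (hP : IsLeastDegreeInKer φ P) (hX : φ X ≠ 0) :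
    P.coeff 0 ≠ 0 := by
  intro h0
  have hfac : P.divX * X = P := by simpa [h0] using divX_mul_X_add P
  have hdivX : P.divX = 0 := by
    refine hP.eq_zero_of_degree_lt _ ?_ (degree_divX_lt hP.ne_zero)
    have := hP.map_eq_zero
    rw [← hfac, map_mul] at this
    exact (mul_eq_zero.mp this).resolve_right hX
  exact hP.ne_zero (by rw [← hfac, hdivX, zero_mul])

end IsLeastDegreeInKer

end LeastDegree

section TwistedDerivative

open PowerSeries

@[simp, norm_cast]
theorem coe_natCast (n : ℕ) : ((n : R[X]) : R⟦X⟧) = n :=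
  map_natCast coeToPowerSeries.ringHom n

/-- The derivation of `R[X][T]` acting as `B • d/dX` on coefficients and sending `T` to `A T`. -/
noncomputable def twistedDerivative (A B : R[X]) (p : R[X][X]) : R[X][X] :=
  ∑ i ∈ Finset.range (p.natDegree + 1),
    monomial i (B * derivative (p.coeff i) + i * A * p.coeff i)

variable (A B : R[X])

theorem coeff_twistedDerivative (p : R[X][X]) (i : ℕ) :
    (twistedDerivative A B p).coeff i = B * derivative (p.coeff i) + i * A * p.coeff i := by
  rw [twistedDerivative, finsetSum_coeff]
  simp only [coeff_monomial, Finset.sum_ite_eq', Finset.mem_range]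
  split_ifs with hi
  · rfl
  · simp [coeff_eq_zero_of_natDegree_lt (not_lt.mp hi)]

theorem natDegree_twistedDerivative_le (p : R[X][X]) :
    (twistedDerivative A B p).natDegree ≤ p.natDegree :=
  natDegree_le_iff_coeff_eq_zero.mpr fun i hi => by
    simp [coeff_twistedDerivative, coeff_eq_zero_of_natDegree_lt hi]

theorem eval₂_twistedDerivative {F : R⟦X⟧} (hF : (B : R⟦X⟧) * d⁄dX R F = A * F) (p : R[X][X]) :
    eval₂ coeToPowerSeries.ringHom F (twistedDerivative A B p) =
      B * d⁄dX R (eval₂ coeToPowerSeries.ringHom F p) := by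
  rw [twistedDerivative, eval₂_finsetSum, eval₂_eq_sum_range (p := p), map_sum, Finset.mul_sum]
  refine Finset.sum_congr rfl fun i _ => ?_
  have hpow := (d⁄dX R).mul_apply_pow_of_mul_apply_eq hF i
  simp only [eval₂_monomial, coeToPowerSeries.ringHom_apply, Derivation.leibniz, smul_eq_mul,
    derivative_coe, coe_add, coe_mul, coe_natCast]
  linear_combination -(p.coeff i : R⟦X⟧) * hpow

end TwistedDerivative

end Polynomial

section FirstOrderODE

open Polynomial
open scoped PowerSeries

variable {k : Type*} [Field k] [CharZero k]

theorem exists_mul_derivative_eq_of_mul_pow_eq {F : k⟦X⟧} (hF : F ≠ 0) {t : ℕ} (ht : t ≠ 0)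
    {A B : k[X]} (hB : B ≠ 0) (h : (B : k⟦X⟧) * F ^ t = A) :
    ∃ A B : k[X], B ≠ 0 ∧ (B : k⟦X⟧) * d⁄dX k F = A * F := by
  have hA : A ≠ 0 := by
    rw [Ne, ← coe_eq_zero_iff, ← h]
    exact mul_ne_zero (coe_eq_zero_iff.not.mpr hB) (pow_ne_zero t hF)
  refine ⟨derivative A * B - A * derivative B, t * A * B, by simp [ht, hA, hB], ?_⟩
  have hderiv := congrArg (d⁄dX k) h
  simp only [Derivation.leibniz, smul_eq_mul, PowerSeries.derivative_coe] at hderiv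
  have hpow := (d⁄dX k).mul_apply_pow_of_mul_apply_eq (mul_comm F (d⁄dX k F)) t
  push_cast
  linear_combination (B : k⟦X⟧) * F * hderiv - (B : k⟦X⟧) ^ 2 * hpow
    - (t * B * d⁄dX k F + F * derivative B) * h

theorem exists_mul_pow_eq_of_mul_derivative_eq {F : k⟦X⟧} (hF : F ≠ 0) {P : k[X][X]}
    (hP : P ≠ 0) (halg : eval₂ coeToPowerSeries.ringHom F P = 0) {A B : k[X]}
    (hB : B ≠ 0) (hode : (B : k⟦X⟧) * d⁄dX k F = A * F) :
    ∃ t : ℕ, 1 ≤ t ∧ ∃ A B : k[X], B ≠ 0 ∧ (B : k⟦X⟧) * F ^ t = A := by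
  set φ := eval₂RingHom coeToPowerSeries.ringHom F
  obtain ⟨P₀, hP₀⟩ := IsLeastDegreeInKer.exists_of_map_eq_zero (φ := φ) hP halg
  set n := P₀.natDegree
  set a := P₀.leadingCoeff
  set b := P₀.coeff 0
  have hcoeff : a * (B * derivative b) = (B * derivative a + n * A * a) * b := by
    have hδ : φ (twistedDerivative A B P₀) = 0 := by
      have h0 : eval₂ coeToPowerSeries.ringHom F P₀ = 0 := hP₀.map_eq_zero
      simp [φ, eval₂_twistedDerivative A B hode, h0]
    have hmul := hP₀.C_leadingCoeff_mul_eq hδ (natDegree_twistedDerivative_le A B P₀)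
    simpa [coeff_C_mul, coeff_twistedDerivative] using congrArg (coeff · 0) hmul
  have hwronskian : d⁄dX k (a * F ^ n) * b = (a * F ^ n) * d⁄dX k b := by
    refine mul_left_cancel₀ (coe_eq_zero_iff.not.mpr hB) ?_
    have hpow := (d⁄dX k).mul_apply_pow_of_mul_apply_eq hode n
    have hcoeff' := congrArg ((↑) : k[X] → k⟦X⟧) hcoeff
    push_cast at hcoeff'
    simp only [Derivation.leibniz, smul_eq_mul, PowerSeries.derivative_coe]
    linear_combination (a * b : k⟦X⟧) * hpow - F ^ n * hcoeff'
  have hb : (b : k⟦X⟧) ≠ 0 := coe_eq_zero_iff.not.mpr (hP₀.coeff_zero_ne_zero (by simpa [φ]))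
  obtain ⟨c, hc⟩ := PowerSeries.exists_eq_C_mul_of_derivative_mul_eq hb hwronskian
  have hC : Function.Injective (φ.comp C) := by simp [φ, Function.Injective]
  exact ⟨n, hP₀.natDegree_pos hC, C c * b, a, leadingCoeff_ne_zero.mpr hP₀.ne_zero,
    by rw [hc, coe_mul, coe_C]⟩

end FirstOrderODE

/-- For a nonzero algebraic formal power series `F` over `ℂ(z)`, being root-rational
(some power of `F` is a ratio of polynomials) is equivalent to satisfying a first-order
homogeneous linear differential equation over `ℂ(z)`. -/
theorem rootRational_iff_firstOrder_ODE (F : PowerSeries ℂ) (hF : F ≠ 0)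
    (P : Polynomial (Polynomial ℂ)) (hP : P ≠ 0)
    (halg : Polynomial.eval₂ Polynomial.coeToPowerSeries.ringHom F P = 0) :
    (∃ t : ℕ, 1 ≤ t ∧ ∃ A B : Polynomial ℂ, B ≠ 0 ∧
        (B : PowerSeries ℂ) * F ^ t = (A : PowerSeries ℂ)) ↔
    (∃ A B : Polynomial ℂ, B ≠ 0 ∧
        (B : PowerSeries ℂ) * (PowerSeries.derivative ℂ F) =
          (A : PowerSeries ℂ) * F) := by
  constructor
  · rintro ⟨t, ht, A, B, hB, h⟩
    exact exists_mul_derivative_eq_of_mul_pow_eq hF (by omega) hB h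
  · rintro ⟨A, B, hB, hode⟩
    exact exists_mul_pow_eq_of_mul_derivative_eq hF hP halg hB hode
end

section
/- Let R be a ring with a discrete valuation v. Assume R has characteristic zero and there is a prime number p with v(p·1_R) > 0. Let x, y ∈ R be commuting elements with v(x) = v(y) = 0 and (p − 1)·v(x − y) > v(p·1_R) (i.e. v(x − y) > v(p)/(p − 1)). Then for every integer n ≥ 1 one has v(x^n − y^n) = v(x − y) + v(n·1_R). -/
/-!
Write `n = p ^ k * m` with `p ∤ m`, so that `v m = 0`. For such `m`, the factor
`∑ xⁱ y^(m-1-i)` of `x ^ m - y ^ m` is congruent to the unit `m y^(m-1)` modulo elements of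
valuation `≥ v (x - y) > 0`, hence `v (x ^ m - y ^ m) = v (x - y)`. For the prime `p`, expand
`((x - y) + y) ^ p`: the linear term `p y^(p-1) (x - y)` has valuation `v p + v (x - y)`, the middle
terms are divisible by `p (x - y) ^ 2`, and the top term `(x - y) ^ p` has valuation
`p • v (x - y) > v p + v (x - y)`. The hypothesis survives `(x, y) ↦ (x ^ p, y ^ p)`, so iterating
gives `v (x ^ p ^ k - y ^ p ^ k) = v (x - y) + k • v p`.
-/

open Finset

theorem pos_of_nonneg_of_lt_nsmul {M : Type*} [AddMonoid M] [LinearOrder M] [AddLeftMono M]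
    {a b : M} {n : ℕ} (ha : 0 ≤ a) (h : a < n • b) : 0 < b := by
  by_contra! hb
  exact (h.trans_le (nsmul_nonpos hb n)).not_ge ha

theorem Commute.add_pow_succ_sub_pow_succ {R : Type*} [Ring R] {d y : R} (h : Commute d y)
    (n : ℕ) : (d + y) ^ (n + 1) - y ^ (n + 1) =
      d * ∑ k ∈ range (n + 1), d ^ k * y ^ (n - k) * (n + 1).choose (k + 1) := by
  rw [h.add_pow, sum_range_succ', mul_sum]
  simp only [pow_zero, one_mul, Nat.sub_zero, Nat.choose_zero_right, Nat.cast_one, mul_one,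
    add_sub_cancel_right, ← mul_assoc, ← pow_succ', Nat.add_sub_add_right]

namespace AddValuation

section

variable {R Γ₀ : Type*} [Ring R] [LinearOrderedAddCommMonoidWithTop Γ₀] (v : AddValuation R Γ₀)

theorem map_natCast_nonneg (n : ℕ) : 0 ≤ v n := by
  induction n with
  | zero => simp
  | succ n ih => exact Nat.cast_succ (R := R) n ▸ v.map_le_add ih v.map_one.ge

theorem map_intCast_nonneg (m : ℤ) : 0 ≤ v m := by
  obtain ⟨n, rfl | rfl⟩ := Int.eq_nat_or_neg m
  · exact_mod_cast v.map_natCast_nonneg n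
  · simpa using v.map_natCast_nonneg n

theorem map_natCast_eq_zero_of_not_dvd {p : ℕ} (hp : p.Prime) (hvp : 0 < v p) {n : ℕ}
    (hn : ¬p ∣ n) : v n = 0 := by
  refine (v.map_natCast_nonneg n).antisymm' (not_lt.mp fun hvn => ?_)
  obtain ⟨a, b, hab⟩ := Nat.isCoprime_iff_coprime.mpr (hp.coprime_iff_not_dvd.mpr hn)
  have h1 : ((a * p + b * n : ℤ) : R) = 1 := by rw [hab, Int.cast_one]
  have : (0 : Γ₀) < v ((a * p + b * n : ℤ) : R) := by
    push_cast
    refine v.map_lt_add ?_ ?_ <;> rw [map_mul]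
    · exact hvp.trans_le (le_add_of_nonneg_left (v.map_intCast_nonneg a))
    · exact hvn.trans_le (le_add_of_nonneg_left (v.map_intCast_nonneg b))
  simp [h1] at this

theorem map_geom_sum₂_nonneg {x y : R} (hx : 0 ≤ v x) (hy : 0 ≤ v y) (n : ℕ) :
    0 ≤ v (∑ i ∈ range n, x ^ i * y ^ (n - 1 - i)) :=
  v.map_le_sum fun i _ => by
    rw [map_mul, map_pow, map_pow]
    exact add_nonneg (nsmul_nonneg hx i) (nsmul_nonneg hy _)

theorem map_sub_le_map_pow_sub_pow {x y : R} (hxy : Commute x y) (hx : 0 ≤ v x) (hy : 0 ≤ v y)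
    (n : ℕ) : v (x - y) ≤ v (x ^ n - y ^ n) := by
  rw [← hxy.geom_sum₂_mul, map_mul]
  exact le_add_of_nonneg_left (v.map_geom_sum₂_nonneg hx hy n)

theorem map_geom_sum₂_eq_zero {x y : R} (hxy : Commute x y) (hx : 0 ≤ v x) (hy : v y = 0)
    (hd : 0 < v (x - y)) {n : ℕ} (hn : v n = 0) :
    v (∑ i ∈ range n, x ^ i * y ^ (n - 1 - i)) = 0 := by
  have hlead : v (n * y ^ (n - 1)) = 0 := by simp [hn, hy]
  have hdiag : ∑ i ∈ range n, y ^ i * y ^ (n - 1 - i) = n * y ^ (n - 1) := by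
    rw [sum_congr rfl fun i hi => by
      rw [← pow_add, Nat.add_sub_cancel' (by rw [mem_range] at hi; omega)],
      sum_const, card_range, nsmul_eq_mul]
  have hdiff : ∑ i ∈ range n, x ^ i * y ^ (n - 1 - i) - n * y ^ (n - 1) =
      ∑ i ∈ range n, (x ^ i - y ^ i) * y ^ (n - 1 - i) := by
    simp only [← hdiag, ← sum_sub_distrib, sub_mul]
  refine hlead ▸ v.map_eq_of_lt_sub ?_
  rw [hlead, hdiff]
  refine v.map_lt_sum' (hd.trans_le le_top) fun i _ => ?_
  rw [map_mul, map_pow, hy, nsmul_zero, add_zero]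
  exact hd.trans_le (v.map_sub_le_map_pow_sub_pow hxy hx hy.ge i)

theorem map_pow_sub_pow_of_map_natCast_eq_zero {x y : R} (hxy : Commute x y) (hx : 0 ≤ v x)
    (hy : v y = 0) (hd : 0 < v (x - y)) {n : ℕ} (hn : v n = 0) :
    v (x ^ n - y ^ n) = v (x - y) := by
  rw [← hxy.geom_sum₂_mul, map_mul, v.map_geom_sum₂_eq_zero hxy hx hy hd hn, zero_add]

end

section

variable {R : Type*} [Ring R] (v : AddValuation R (WithTop ℤ))

theorem map_pow_prime_sub_pow_prime {p : ℕ} (hp : p.Prime) {x y : R} (hxy : Commute x y)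
    (hy : v y = 0) (h : v p < (p - 1) • v (x - y)) :
    v (x ^ p - y ^ p) = v (x - y) + v p := by
  obtain ⟨q, rfl⟩ : ∃ q, p = q + 1 := ⟨p - 1, (Nat.sub_add_cancel hp.one_le).symm⟩
  obtain ⟨d, rfl⟩ : ∃ d, x = d + y := ⟨x - y, (sub_add_cancel x y).symm⟩
  rw [Nat.add_sub_cancel, add_sub_cancel_right] at h
  rw [add_sub_cancel_right]
  have hdy : Commute d y := by simpa using hxy.sub_left (Commute.refl y)
  have hd : 0 < v d := pos_of_nonneg_of_lt_nsmul (v.map_natCast_nonneg _) h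
  have hlead : v (d ^ 0 * y ^ (q - 0) * ((q + 1).choose (0 + 1) : R)) = v ↑(q + 1) := by
    simp [hy]
  rw [hdy.add_pow_succ_sub_pow_succ, map_mul, sum_range_succ', map_add_eq_of_lt_right]
  · rw [hlead]
  rw [hlead]
  refine v.map_lt_sum h.ne_top fun k hk => ?_
  rw [mem_range] at hk
  simp only [map_mul, map_pow, hy, nsmul_zero, add_zero]
  -- the top term `d ^ q` has coefficient `1`; every other coefficient is divisible by `p`
  rcases eq_or_lt_of_le (Nat.succ_le_of_lt hk) with rfl | hkq
  · simpa using h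
  obtain ⟨m, hm⟩ := hp.dvd_choose_self (Nat.succ_ne_zero (k + 1)) (by omega)
  calc v ↑(q + 1) < v ↑(q + 1) + (k + 1) • v d := by
        simpa using WithTop.add_lt_add_left h.ne_top (nsmul_pos hd k.succ_ne_zero)
    _ ≤ (k + 1) • v d + v ↑((q + 1).choose (k + 1 + 1)) := by
        rw [add_comm, hm, Nat.cast_mul, map_mul]
        exact add_le_add_right (le_add_of_nonneg_right (v.map_natCast_nonneg m)) _

theorem map_pow_prime_pow_sub_pow_prime_pow {p : ℕ} (hp : p.Prime) {x y : R}
    (hxy : Commute x y) (hy : v y = 0) (h : v p < (p - 1) • v (x - y)) (k : ℕ) :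
    v (x ^ p ^ k - y ^ p ^ k) = v (x - y) + k • v p := by
  induction k with
  | zero => simp
  | succ k ih =>
    have h' : v p < (p - 1) • v (x ^ p ^ k - y ^ p ^ k) := by
      rw [ih, nsmul_add]
      exact h.trans_le (le_add_of_nonneg_right (nsmul_nonneg
        (nsmul_nonneg (v.map_natCast_nonneg p) k) _))
    rw [pow_succ, pow_mul, pow_mul,
      v.map_pow_prime_sub_pow_prime hp (hxy.pow_pow _ _) (by simp [hy]) h', ih, succ_nsmul,
      add_assoc]

theorem map_pow_sub_pow {p : ℕ} (hp : p.Prime) (hvp : 0 < v p) {x y : R} (hxy : Commute x y)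
    (hx : 0 ≤ v x) (hy : v y = 0) (h : v p < (p - 1) • v (x - y)) (n : ℕ) :
    v (x ^ n - y ^ n) = v (x - y) + v n := by
  rcases eq_or_ne n 0 with rfl | hn
  · simp
  obtain ⟨k, m, hm, rfl⟩ := Nat.exists_eq_pow_mul_and_not_dvd hn p hp.ne_one
  have hvm : v m = 0 := v.map_natCast_eq_zero_of_not_dvd hp hvp hm
  have hpk := v.map_pow_prime_pow_sub_pow_prime_pow hp hxy hy h k
  have hd : 0 < v (x ^ p ^ k - y ^ p ^ k) := by
    rw [hpk]
    exact (pos_of_nonneg_of_lt_nsmul (v.map_natCast_nonneg p) h).trans_le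
      (le_add_of_nonneg_right (nsmul_nonneg (v.map_natCast_nonneg p) k))
  rw [pow_mul, pow_mul, v.map_pow_sub_pow_of_map_natCast_eq_zero (hxy.pow_pow _ _)
    (by simpa using nsmul_nonneg hx _) (by simp [hy]) hd hvm, hpk, Nat.cast_mul, Nat.cast_pow, map_mul, map_pow,
    hvm, add_zero]

end

end AddValuation

theorem valuation_powers_char_zero_ramified_general {R : Type*} [Ring R]
    (v : R → WithTop ℤ)
    (hv0 : ∀ x : R, v x = ⊤ ↔ x = 0)
    (hvmul : ∀ x y : R, v (x * y) = v x + v y)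
    (hvadd : ∀ x y : R, min (v x) (v y) ≤ v (x + y))
    (p : ℕ) (hp : p.Prime) (hvp : 0 < v ((p : R)))
    (x y : R) (hcomm : x * y = y * x)
    (hvx : v x = 0) (hvy : v y = 0)
    (hxy : v ((p : R)) < (p - 1) • v (x - y)) :
    ∀ n : ℕ, 1 ≤ n → v (x ^ n - y ^ n) = v (x - y) + v ((n : R)) := by
  have hv1 : v 1 = 0 := by simpa [hvx] using (hvmul x 1).symm
  intro n _
  exact (AddValuation.of v ((hv0 0).2 rfl) hv1 hvadd hvmul).map_pow_sub_pow hp hvp hcomm hvx.ge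
    hvy hxy n

/-- In a characteristic-zero ring with a discrete valuation with v(p) > 0:
for commuting x, y with v(x) = v(y) = 0 and (p−1)·v(x − y) > v(p), one has
v(xⁿ − yⁿ) = v(x − y) + v(n) for all n ≥ 1. -/
theorem valuation_powers_char_zero_ramified {R : Type*} [Ring R] [CharZero R]
    (v : R → WithTop ℤ)
    (hv0 : ∀ x : R, v x = ⊤ ↔ x = 0)
    (hvmul : ∀ x y : R, v (x * y) = v x + v y)
    (hvadd : ∀ x y : R, min (v x) (v y) ≤ v (x + y))
    (p : ℕ) (hp : p.Prime) (hvp : 0 < v ((p : R)))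
    (x y : R) (hcomm : x * y = y * x)
    (hvx : v x = 0) (hvy : v y = 0)
    (hxy : v ((p : R)) < (p - 1) • v (x - y)) :
    ∀ n : ℕ, 1 ≤ n → v (x ^ n - y ^ n) = v (x - y) + v ((n : R)) :=
  valuation_powers_char_zero_ramified_general v hv0 hvmul hvadd p hp hvp x y hcomm hvx hvy hxy
end

section
/- Let R be a ring with a discrete valuation v, and assume that either (a) R has characteristic zero and there is a prime p with v(p·1_R) > 0, or (b) R has characteristic p for a prime p. Let z ∈ R satisfy v(z − 1) > 0. Then the values v(z^n − 1) are unbounded as n ranges over the positive integers: for every integer M there exists n ≥ 1 with v(z^n − 1) ≥ M. -/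
private lemma wt_one_le {x : WithTop ℤ} (h : 0 < x) : 1 ≤ x := by
  induction x using WithTop.recTopCoe with
  | top => exact le_top
  | coe a =>
    have ha : (0 : ℤ) < a := by exact_mod_cast h
    exact_mod_cast ha

/-- In a ring with a discrete valuation which is either of characteristic zero with v(p) > 0
for some prime p, or of prime characteristic: if v(z − 1) > 0, then v(zⁿ − 1) is
unbounded as n ranges over positive integers. -/
theorem valuation_unbounded {R : Type*} [Ring R]
    (v : R → WithTop ℤ)
    (hv0 : ∀ x : R, v x = ⊤ ↔ x = 0)
    (hvmul : ∀ x y : R, v (x * y) = v x + v y)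
    (hvadd : ∀ x y : R, min (v x) (v y) ≤ v (x + y))
    (hcase : (CharZero R ∧ ∃ p : ℕ, p.Prime ∧ 0 < v ((p : R))) ∨
             (∃ p : ℕ, p.Prime ∧ CharP R p))
    (z : R) (hz : 0 < v (z - 1)) :
    ∀ M : ℤ, ∃ n : ℕ, 1 ≤ n ∧ (M : WithTop ℤ) ≤ v (z ^ n - 1) := by
  intro M
  by_cases htriv : (1 : R) = 0
  · refine ⟨1, le_refl 1, ?_⟩
    have hall : z ^ 1 - 1 = 0 := by
      have : z ^ 1 - 1 = (z ^ 1 - 1) * 1 := (mul_one _).symm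
      rw [this, htriv, mul_zero]
    rw [hall, (hv0 0).mpr rfl]
    exact le_top
  · -- v 1 = 0
    have hv1 : v 1 = 0 := by
      have h := hvmul 1 1
      rw [mul_one] at h
      have hne : v 1 ≠ ⊤ := fun h' => htriv ((hv0 1).mp h')
      obtain ⟨a, ha⟩ := WithTop.ne_top_iff_exists.mp hne
      rw [← ha] at h ⊢
      have : a = a + a := by exact_mod_cast h
      have : a = 0 := by omega
      rw [this]; rfl
    have hvtop : v 0 = ⊤ := (hv0 0).mpr rfl
    -- v of a sum bounded below
    have hsum : ∀ (n : ℕ) (f : ℕ → R) (c : WithTop ℤ),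
        (∀ i, i < n → c ≤ v (f i)) → c ≤ v (∑ i ∈ Finset.range n, f i) := by
      intro n
      induction n with
      | zero => intro f c _; simp [hvtop]
      | succ n ih =>
        intro f c h
        rw [Finset.sum_range_succ]
        refine le_trans (le_min (ih f c fun i hi => h i (by omega)) (h n (by omega)))
          (hvadd _ _)
    -- v w ≥ 0 and v(w^i - 1) ≥ v(w-1) whenever v(w-1) > 0
    have hA : ∀ w : R, 0 < v (w - 1) → ∀ i : ℕ, v (w - 1) ≤ v (w ^ i - 1) := by
      intro w hw
      have hw0 : 0 ≤ v w := by
        have : w = 1 + (w - 1) := by abel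
        rw [this]
        refine le_trans ?_ (hvadd 1 (w - 1))
        rw [hv1]
        exact le_min le_rfl hw.le
      intro i
      induction i with
      | zero => simp [hvtop]
      | succ i ih =>
        have heq : w ^ (i + 1) - 1 = w * (w ^ i - 1) + (w - 1) := by
          rw [mul_sub, mul_one, ← pow_succ']; abel
        rw [heq]
        refine le_trans ?_ (hvadd _ _)
        refine le_min ?_ le_rfl
        rw [hvmul]
        calc v (w - 1) = 0 + v (w - 1) := (zero_add _).symm
          _ ≤ v w + v (w ^ i - 1) := add_le_add hw0 ih
    -- a prime p with v(p) ≥ 1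
    obtain ⟨p, hp, hp1⟩ : ∃ p : ℕ, p.Prime ∧ 1 ≤ v ((p : R)) := by
      rcases hcase with ⟨_, p, hp, hvp⟩ | ⟨p, hp, hcp⟩
      · exact ⟨p, hp, wt_one_le hvp⟩
      · refine ⟨p, hp, ?_⟩
        rw [(CharP.cast_eq_zero R p : ((p : ℕ) : R) = 0), hvtop]
        exact le_top
    -- key step
    have hB : ∀ w : R, 1 ≤ v (w - 1) → v (w - 1) + 1 ≤ v (w ^ p - 1) := by
      intro w hw
      have hwpos : 0 < v (w - 1) := lt_of_lt_of_le zero_lt_one hw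
      have hgeom : (∑ i ∈ Finset.range p, w ^ i) * (w - 1) = w ^ p - 1 := geom_sum_mul w p
      have hS : 1 ≤ v (∑ i ∈ Finset.range p, w ^ i) := by
        have hrw : (∑ i ∈ Finset.range p, w ^ i)
            = (∑ i ∈ Finset.range p, (w ^ i - 1)) + (p : R) := by
          rw [Finset.sum_sub_distrib]
          simp
        rw [hrw]
        refine le_trans (le_min ?_ hp1) (hvadd _ _)
        exact hsum p _ 1 fun i _ => le_trans hw (hA w hwpos i)
      calc v (w - 1) + 1 ≤ v (w - 1) + v (∑ i ∈ Finset.range p, w ^ i) :=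
            add_le_add le_rfl hS
        _ = v ((∑ i ∈ Finset.range p, w ^ i) * (w - 1)) := by rw [hvmul, add_comm]
        _ = v (w ^ p - 1) := by rw [hgeom]
    -- iterate
    have hz1 : 1 ≤ v (z - 1) := wt_one_le hz
    have hiter : ∀ k : ℕ, v (z - 1) + (k : WithTop ℤ) ≤ v (z ^ (p ^ k) - 1) := by
      intro k
      induction k with
      | zero => simp
      | succ k ih =>
        have hpow : z ^ (p ^ (k + 1)) = (z ^ (p ^ k)) ^ p := by
          rw [← pow_mul, pow_succ]
        have hwk : 1 ≤ v (z ^ (p ^ k) - 1) := by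
          calc (1 : WithTop ℤ) ≤ v (z - 1) := hz1
            _ ≤ v (z ^ (p ^ k) - 1) := hA z hz _
        have := hB (z ^ (p ^ k)) hwk
        rw [hpow]
        refine le_trans ?_ this
        have : ((k + 1 : ℕ) : WithTop ℤ) = (k : WithTop ℤ) + 1 := by push_cast; rfl
        rw [this, ← add_assoc]
        exact add_le_add ih le_rfl
    refine ⟨p ^ M.toNat, Nat.one_le_pow _ _ hp.pos, ?_⟩
    refine le_trans ?_ (hiter M.toNat)
    calc (M : WithTop ℤ) ≤ ((M.toNat : ℤ) : WithTop ℤ) := by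
          exact_mod_cast Int.self_le_toNat M
      _ ≤ v (z - 1) + ((M.toNat : ℕ) : WithTop ℤ) := by
          refine le_trans ?_ (add_le_add hz1 le_rfl)
          rw [← WithTop.coe_natCast]
          exact le_add_of_nonneg_left zero_le_one
end

section
/- Let G be an abelian group and σ : G → G a group endomorphism that is confined, i.e. the set {x ∈ G : σ^m(x) = x} is finite for every integer m ≥ 1. Let Γ be a finite subgroup of the automorphism group of G, and let α : Γ → Γ be an injective map such that σ ∘ γ = α(γ) ∘ σ for every γ ∈ Γ. Then for every integer n ≥ 1 and every γ ∈ Γ, the set {x ∈ G : σ^n(x) = γ(x)} is finite. -/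
/-!
If `σ x = γ x`, then `σᵏ x = dₖ x` where `d₀ = 0` and `dₖ₊₁ = α dₖ + γ` in `Γ` (whose `+`
is composition). The map `d ↦ α d + γ` is injective on the finite group `Γ`, so `0` is a periodic point of it, of some
period `N ≥ 1` independent of `x`; hence every solution of `σ x = γ x` is fixed by `σᴺ`.
Applying this to `σⁿ` and `αⁿ` bounds the twisted fixed points of `σⁿ` by the fixed points
of `σⁿᴺ`.
-/

open Function

section TwistedFixedPoints

variable {Γ X : Type*} [AddGroup Γ] [AddAction Γ X] {τ : X → X} {β : Γ → Γ}

theorem iterate_vadd_of_map_vadd (hτ : ∀ (g : Γ) (x : X), τ (g +ᵥ x) = β g +ᵥ τ x)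
    (k : ℕ) (g : Γ) (x : X) : τ^[k] (g +ᵥ x) = β^[k] g +ᵥ τ^[k] x := by
  induction k generalizing g x with
  | zero => rfl
  | succ k ih => simp only [iterate_succ_apply, hτ, ih]

theorem iterate_eq_vadd_of_map_vadd (hτ : ∀ (g : Γ) (x : X), τ (g +ᵥ x) = β g +ᵥ τ x)
    {g : Γ} {x : X} (hx : τ x = g +ᵥ x) (k : ℕ) :
    τ^[k] x = (fun d => β d + g)^[k] 0 +ᵥ x := by
  induction k with
  | zero => simp
  | succ k ih => rw [iterate_succ_apply', iterate_succ_apply', ih, hτ, hx, add_vadd]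

theorem exists_pos_iterate_eq_self_of_map_vadd [Finite Γ] (hβ : Injective β)
    (hτ : ∀ (g : Γ) (x : X), τ (g +ᵥ x) = β g +ᵥ τ x) (g : Γ) :
    ∃ N, 0 < N ∧ ∀ x, τ x = g +ᵥ x → τ^[N] x = x := by
  have hinj : Injective fun d => β d + g := (add_left_injective g).comp hβ
  obtain ⟨N, hN, hper⟩ := hinj.mem_periodicPts 0
  refine ⟨N, hN, fun x hx => ?_⟩
  rw [iterate_eq_vadd_of_map_vadd hτ hx, hper.eq, zero_vadd]

end TwistedFixedPoints

/-- If σ is a confined endomorphism of an abelian group G, Γ a finite subgroup of Aut(G),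
and α : Γ → Γ an injective map with σ ∘ γ = α(γ) ∘ σ, then for every n ≥ 1 and γ ∈ Γ
the set {x : σⁿ(x) = γ(x)} is finite. -/
theorem confined_twisted_fixed_points_finite {G : Type*} [AddCommGroup G]
    (σ : AddMonoid.End G)
    (hconf : ∀ m : ℕ, 1 ≤ m → {x : G | (σ ^ m) x = x}.Finite)
    (Γ : AddSubgroup (AddAut G)) (hΓfin : (Γ : Set (AddAut G)).Finite)
    (α : Γ → Γ) (hα : Function.Injective α)
    (hcomm : ∀ γ : Γ, ∀ x : G, σ ((γ : AddAut G) x) = ((α γ : AddAut G)) (σ x)) :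
    ∀ n : ℕ, 1 ≤ n → ∀ γ : Γ, {x : G | (σ ^ n) x = (γ : AddAut G) x}.Finite := by
  intro n hn γ
  have : Finite Γ := hΓfin.to_subtype
  -- `Γ` acts on `G` by evaluation, `δ +ᵥ x = δ x`.
  have hσn : ∀ (δ : Γ) (x : G), (σ ^ n) (δ +ᵥ x) = α^[n] δ +ᵥ (σ ^ n) x := by
    rw [AddMonoid.End.coe_pow]
    exact iterate_vadd_of_map_vadd hcomm n
  obtain ⟨N, hN, hfix⟩ := exists_pos_iterate_eq_self_of_map_vadd (hα.iterate n) hσn γ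
  refine (hconf (n * N) (Nat.mul_pos hn hN)).subset fun x hx => ?_
  rw [Set.mem_ofPred_eq, pow_mul, AddMonoid.End.coe_pow]
  exact hfix x hx
end

section
/- Let R be a (not necessarily commutative) ring with a discrete valuation v having nonnegative values. Let σ, γ ∈ R and let k ≥ 1 be an integer with γ^k = 1. Assume that v(σ^j − 1) = 0 for every integer j ≥ 1. Then v(σ^n − γ) = 0 for every integer n ≥ 1. (In the setting of the paper: if σ is coseparable then σ^n − γ is a separable isogeny for all n and all γ in the finite group Γ.) -/
/-- In a ring with a nonnegative discrete valuation: if γ is a root of unity and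
v(σ^j − 1) = 0 for all j ≥ 1, then v(σⁿ − γ) = 0 for all n ≥ 1. -/
theorem coseparable_twisted_separable {R : Type*} [Ring R]
    (v : R → WithTop ℤ)
    (hv0 : ∀ x : R, v x = ⊤ ↔ x = 0)
    (hvmul : ∀ x y : R, v (x * y) = v x + v y)
    (hvadd : ∀ x y : R, min (v x) (v y) ≤ v (x + y))
    (hnonneg : ∀ x : R, x ≠ 0 → 0 ≤ v x)
    (σ γ : R) (k : ℕ) (hk : 1 ≤ k) (hγ : γ ^ k = 1)
    (hsep : ∀ j : ℕ, 1 ≤ j → v (σ ^ j - 1) = 0) :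
    ∀ n : ℕ, 1 ≤ n → v (σ ^ n - γ) = 0 := by
  -- v 1 = 0
  have h1ne : v 1 ≠ ⊤ := by
    intro h
    have h10 : (1 : R) = 0 := (hv0 1).mp h
    have : σ ^ 1 - 1 = 0 := by
      have := subsingleton_of_zero_eq_one h10.symm
      exact Subsingleton.elim _ _
    have := hsep 1 le_rfl
    rw [(hv0 _).mpr ‹σ ^ 1 - 1 = 0›] at this
    exact (by simp : (⊤ : WithTop ℤ) ≠ 0) this
  have v1 : v 1 = 0 := by
    have h := hvmul 1 1
    rw [one_mul] at h
    lift v 1 to ℤ using h1ne with a ha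
    have : a = a + a := by exact_mod_cast h
    have : a = 0 := by omega
    exact_mod_cast this
  -- v γ = 0
  have hγγ : γ ^ (k - 1) * γ = 1 := by
    rw [← pow_succ]
    have : k - 1 + 1 = k := Nat.succ_pred_eq_of_pos hk
    rw [this, hγ]
  have hsumγ : v (γ ^ (k - 1)) + v γ = 0 := by
    rw [← hvmul, hγγ, v1]
  have hγne : v γ ≠ ⊤ := by
    intro h; rw [h] at hsumγ; simp at hsumγ
  have hγ1ne : v (γ ^ (k - 1)) ≠ ⊤ := by
    intro h; rw [h] at hsumγ; simp at hsumγ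
  have vγ : v γ = 0 := by
    have hγ0 : γ ≠ 0 := fun h => hγne ((hv0 γ).mpr h)
    have hγ10 : γ ^ (k - 1) ≠ 0 := fun h => hγ1ne ((hv0 _).mpr h)
    have h1 := hnonneg γ hγ0
    have h2 := hnonneg _ hγ10
    have : v γ ≤ v γ + v (γ ^ (k - 1)) := le_add_of_nonneg_right h2
    rw [add_comm, hsumγ] at this
    exact le_antisymm this h1
  -- v (γ ^ i) = 0 for all i
  have vγpow : ∀ i : ℕ, v (γ ^ i) = 0 := by
    intro i
    induction i with
    | zero => simpa using v1
    | succ m ih => rw [pow_succ, hvmul, ih, vγ, add_zero]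
  -- v (σ ^ m) ≥ 0
  have vσpow : ∀ m : ℕ, (0 : WithTop ℤ) ≤ v (σ ^ m) := by
    intro m
    by_cases h : σ ^ m = 0
    · rw [(hv0 _).mpr h]; exact le_top
    · exact hnonneg _ h
  -- sum lemma
  have hsumle : ∀ (s : Finset ℕ) (f : ℕ → R) (c : WithTop ℤ),
      (∀ i ∈ s, c ≤ v (f i)) → c ≤ v (∑ i ∈ s, f i) := by
    intro s f c
    induction s using Finset.cons_induction with
    | empty => intro _; rw [Finset.sum_empty, (hv0 0).mpr rfl]; exact le_top
    | cons a s ha ih =>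
      intro h
      rw [Finset.sum_cons]
      refine le_trans ?_ (hvadd _ _)
      exact le_min (h a (Finset.mem_cons_self a s))
        (ih fun i hi => h i (Finset.mem_cons_of_mem hi))
  intro n hn
  set c := v (σ ^ n - γ) with hc
  -- σ^n - γ ≠ 0
  have hne : σ ^ n - γ ≠ 0 := by
    intro h
    have hσn : σ ^ n = γ := by
      have := sub_eq_zero.mp h; exact this
    have : σ ^ (n * k) - 1 = 0 := by
      rw [pow_mul, hσn, hγ, sub_self]
    have h2 := hsep (n * k) (Nat.one_le_iff_ne_zero.mpr (by positivity))
    rw [(hv0 _).mpr this] at h2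
    exact (by simp : (⊤ : WithTop ℤ) ≠ 0) h2
  have hge : (0 : WithTop ℤ) ≤ c := hnonneg _ hne
  -- telescoping identity
  have hkey : σ ^ (n * k) - 1 = ∑ i ∈ Finset.range k, γ ^ i * (σ ^ n - γ) * σ ^ (n * (k - 1 - i)) := by
    have hterm : ∀ i ∈ Finset.range k,
        γ ^ i * (σ ^ n - γ) * σ ^ (n * (k - 1 - i))
          = γ ^ i * σ ^ (n * (k - i)) - γ ^ (i + 1) * σ ^ (n * (k - (i + 1))) := by
      intro i hi
      have hik : i < k := Finset.mem_range.mp hi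
      have h1 : n * (k - i) = n + n * (k - 1 - i) := by
        have : k - i = (k - 1 - i) + 1 := by omega
        rw [this]; ring
      have h2 : k - (i + 1) = k - 1 - i := by omega
      rw [h1, h2, pow_add, pow_succ]
      noncomm_ring
    rw [Finset.sum_congr rfl hterm,
      Finset.sum_range_sub' (fun i => γ ^ i * σ ^ (n * (k - i)))]
    simp [hγ]
  -- conclude
  have hle : c ≤ 0 := by
    have h0 : v (σ ^ (n * k) - 1) = 0 :=
      hsep (n * k) (Nat.one_le_iff_ne_zero.mpr (by positivity))
    rw [← h0, hkey]
    apply hsumle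
    intro i _
    rw [hvmul, hvmul, vγpow, zero_add]
    exact le_add_of_nonneg_right (vσpow _)
  exact le_antisymm hle hge
end

section
/- Let R be a (not necessarily commutative) ring with a discrete valuation v, let Γ be a finite subgroup of the group of units of R, let σ ∈ R, and let α : Γ → Γ be a map such that σ·γ = α(γ)·σ in R for every γ ∈ Γ. Let N be a positive integer such that N > v(γ − 1) for every γ ∈ Γ with γ ≠ 1. If n ≥ 1 and γ ∈ Γ satisfy v(σ^n − γ) ≥ N, then σ^n and γ commute: σ^n·γ = γ·σ^n. -/
/-- If Γ is a finite subgroup of units of a ring with a discrete valuation, σ·γ = α(γ)·σ,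
and N exceeds v(γ − 1) for every nontrivial γ ∈ Γ, then v(σⁿ − γ) ≥ N implies that
σⁿ and γ commute. -/
theorem high_valuation_implies_commute {R : Type*} [Ring R]
    (v : R → WithTop ℤ)
    (hv0 : ∀ x : R, v x = ⊤ ↔ x = 0)
    (hvmul : ∀ x y : R, v (x * y) = v x + v y)
    (hvadd : ∀ x y : R, min (v x) (v y) ≤ v (x + y))
    (Γ : Subgroup Rˣ) (hΓfin : (Γ : Set Rˣ).Finite)
    (σ : R) (α : Γ → Γ)
    (hα : ∀ γ : Γ, σ * ((γ : Rˣ) : R) = ((α γ : Rˣ) : R) * σ)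
    (N : ℕ) (hN : 0 < N)
    (hNbig : ∀ γ : Γ, (γ : Rˣ) ≠ 1 → v (((γ : Rˣ) : R) - 1) < (N : WithTop ℤ))
    (n : ℕ) (hn : 1 ≤ n) (γ : Γ)
    (hval : (N : WithTop ℤ) ≤ v (σ ^ n - ((γ : Rˣ) : R))) :
    σ ^ n * ((γ : Rˣ) : R) = ((γ : Rˣ) : R) * σ ^ n := by
  rcases subsingleton_or_nontrivial R with hs | hnt
  · exact Subsingleton.elim _ _
  have hv1 : v 1 = 0 := by
    have h := hvmul 1 1
    rw [one_mul] at h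
    have h1 : v 1 ≠ ⊤ := fun hh => one_ne_zero ((hv0 1).mp hh)
    lift v 1 to ℤ using h1 with a ha
    have h2 : a = a + a := by exact_mod_cast h
    have h3 : a = 0 := by omega
    exact_mod_cast h3
  have hvneg1 : v (-1 : R) = 0 := by
    have h := hvmul (-1 : R) (-1)
    rw [neg_one_mul, neg_neg, hv1] at h
    have h1 : v (-1 : R) ≠ ⊤ := fun hh => (by simp : (-1:R) ≠ 0) ((hv0 _).mp hh)
    lift v (-1 : R) to ℤ using h1 with a ha
    have h2 : (0 : ℤ) = a + a := by exact_mod_cast h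
    have h3 : a = 0 := by omega
    exact_mod_cast h3
  have hvneg : ∀ x : R, v (-x) = v x := by
    intro x
    have := hvmul (-1 : R) x
    rwa [neg_one_mul, hvneg1, zero_add] at this
  have hsub : ∀ x y : R, min (v x) (v y) ≤ v (x - y) := by
    intro x y
    have := hvadd x (-y)
    rwa [← sub_eq_add_neg, hvneg] at this
  haveI : Finite Γ := hΓfin.to_subtype
  have hvΓ : ∀ δ : Γ, v ((δ : Rˣ) : R) = 0 := by
    intro δ
    set m := orderOf δ with hm
    have hmpos : 0 < m := orderOf_pos δ
    have hpow : ((δ : Rˣ) : R) ^ m = 1 := by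
      have h := pow_orderOf_eq_one δ
      have : ((δ : Rˣ) : R) ^ m = (((δ ^ m : Γ) : Rˣ) : R) := by push_cast; ring
      rw [this, h]; rfl
    have hvp : ∀ k : ℕ, v (((δ : Rˣ) : R) ^ k) = k • v ((δ : Rˣ) : R) := by
      intro k
      induction k with
      | zero => simp [hv1]
      | succ k ih =>
          rw [pow_succ, hvmul, ih, succ_nsmul]
    have h0 : m • v ((δ : Rˣ) : R) = 0 := by
      rw [← hvp, hpow, hv1]
    have hne : v ((δ : Rˣ) : R) ≠ ⊤ := by
      exact fun hh => Units.ne_zero _ ((hv0 _).mp hh)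
    lift v ((δ : Rˣ) : R) to ℤ using hne with a ha
    have h1 : (m : ℤ) * a = 0 := by
      have h0' : ((m • a : ℤ) : WithTop ℤ) = ((0 : ℤ) : WithTop ℤ) := by
        push_cast
        exact_mod_cast h0
      have := WithTop.coe_injective h0'
      simpa [nsmul_eq_mul] using this
    have h2 : a = 0 := by
      rcases mul_eq_zero.mp h1 with h | h
      · omega
      · exact h
    exact_mod_cast h2
  have hiter : ∀ k : ℕ, σ ^ k * ((γ : Rˣ) : R) = (((α^[k] γ : Γ) : Rˣ) : R) * σ ^ k := by
    intro k
    induction k with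
    | zero => simp
    | succ k ih =>
        rw [pow_succ', mul_assoc, ih, ← mul_assoc, hα, Function.iterate_succ_apply',
          mul_assoc, ← pow_succ']
  set δ : Γ := α^[n] γ with hδ
  set d : R := ((δ : Rˣ) : R) with hd
  set g : R := ((γ : Rˣ) : R) with hg
  have hdn : σ ^ n * g = d * σ ^ n := hiter n
  have hA : (N : WithTop ℤ) ≤ v (d * (σ ^ n - g)) := by
    rw [hvmul, hvΓ, zero_add]; exact hval
  have hB : (N : WithTop ℤ) ≤ v ((σ ^ n - g) * g) := by
    rw [hvmul, hvΓ, add_zero]; exact hval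
  have hkey : (d - g) * g = (σ ^ n - g) * g - d * (σ ^ n - g) := by
    rw [sub_mul, sub_mul, mul_sub, ← hdn]
    abel
  have hC : (N : WithTop ℤ) ≤ v (d - g) := by
    have h1 : (N : WithTop ℤ) ≤ v ((d - g) * g) := by
      rw [hkey]
      exact le_trans (le_min hB hA) (hsub _ _)
    rwa [hvmul, hvΓ, add_zero] at h1
  have heq : (δ : Rˣ) = (γ : Rˣ) := by
    by_contra hne
    have hne1 : ((δ * γ⁻¹ : Γ) : Rˣ) ≠ 1 := by
      simp only [Subgroup.coe_mul, Subgroup.coe_inv]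
      intro h
      exact hne (by rwa [mul_inv_eq_one] at h)
    have hlt := hNbig (δ * γ⁻¹) hne1
    have hval2 : (N : WithTop ℤ) ≤ v ((((δ * γ⁻¹ : Γ) : Rˣ) : R) - 1) := by
      have hfact : (((δ * γ⁻¹ : Γ) : Rˣ) : R) - 1 = (d - g) * (((γ⁻¹ : Γ) : Rˣ) : R) := by
        push_cast
        rw [sub_mul]
        congr 1
        rw [hg]
        push_cast
        rw [Units.mul_inv]
      rw [hfact, hvmul, hvΓ, add_zero]
      exact hC
    exact absurd hval2 (not_le.mpr hlt)
  rw [hdn, hd, heq]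
end

section
/- Let R be a (not necessarily commutative) ring with a discrete valuation v having nonnegative values, let Γ be a finite subgroup of the group of units of R, let σ ∈ R, and let m ≥ 0 be an integer. Suppose s is the least positive integer such that v(σ^s − γ) ≥ m for some γ ∈ Γ. Then for every integer n ≥ 1: there exists γ ∈ Γ with v(σ^n − γ) ≥ m if and only if s divides n. (Equivalently, the set S_m = {n ∈ ℤ_{>0} : v(σ^n − γ) ≥ m for some γ ∈ Γ} equals s·ℤ_{>0}.) -/
/-!
The elements of valuation at least `m` form a two-sided ideal `I`, and `v (σ ^ n - γ) ≥ m` says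
that `σ ^ n` lands in the image of `Γ` in `R ⧸ I`. For an element `a` of any monoid and a subgroup
`H` of its units, the exponents `n` with `a ^ n ∈ H` contain `0`, are closed under addition, and
`i, i + j` in the set forces `j` in the set; so by division with remainder the positive ones are
exactly the multiples of the least one.
-/

section PowMemUnitsSubgroup

variable {M : Type*} [Monoid M] {H : Subgroup Mˣ} {a : M}

theorem exists_mem_pow_mul_eq {s : ℕ} (hs : ∃ h ∈ H, a ^ s = h) (k : ℕ) :
    ∃ h ∈ H, a ^ (s * k) = h := by
  obtain ⟨h, hH, hh⟩ := hs
  exact ⟨h ^ k, pow_mem hH k, by rw [pow_mul, hh, Units.val_pow_eq_pow_val]⟩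

theorem exists_mem_pow_eq_of_pow_add {i j : ℕ} (hi : ∃ g ∈ H, a ^ i = g)
    (hij : ∃ h ∈ H, a ^ (i + j) = h) : ∃ g ∈ H, a ^ j = g := by
  obtain ⟨g, hgH, hg⟩ := hi
  obtain ⟨h, hhH, hh⟩ := hij
  refine ⟨g⁻¹ * h, mul_mem (inv_mem hgH) hhH, ?_⟩
  rw [Units.val_mul, ← hh, pow_add, hg, Units.inv_mul_cancel_left]

theorem exists_mem_pow_eq_iff_dvd {s : ℕ} (hs : 0 < s) (hsH : ∃ h ∈ H, a ^ s = h)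
    (hleast : ∀ t : ℕ, 0 < t → (∃ h ∈ H, a ^ t = h) → s ≤ t) (n : ℕ) :
    (∃ h ∈ H, a ^ n = h) ↔ s ∣ n := by
  refine ⟨fun hn => ?_, fun ⟨k, hk⟩ => hk ▸ exists_mem_pow_mul_eq hsH k⟩
  rw [← Nat.div_add_mod n s] at hn
  have hrem := exists_mem_pow_eq_of_pow_add (exists_mem_pow_mul_eq hsH (n / s)) hn
  by_contra hndvd
  have hpos : 0 < n % s := Nat.pos_of_ne_zero (mt Nat.dvd_of_mod_eq_zero hndvd)
  exact (hleast _ hpos hrem).not_gt (Nat.mod_lt n hs)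

end PowMemUnitsSubgroup

section ValuationIdeal

variable {R : Type*} [Ring R] {v : R → WithTop ℤ}

theorem valuation_nonneg (hv0 : ∀ x : R, v x = ⊤ ↔ x = 0)
    (hnonneg : ∀ x : R, x ≠ 0 → 0 ≤ v x) (x : R) : 0 ≤ v x := by
  by_cases hx : x = 0
  · rw [(hv0 x).2 hx]
    exact le_top
  · exact hnonneg x hx

theorem valuation_le_valuation_mul_left (hv0 : ∀ x : R, v x = ⊤ ↔ x = 0)
    (hvmul : ∀ x y : R, v (x * y) = v x + v y) (hnonneg : ∀ x : R, x ≠ 0 → 0 ≤ v x)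
    (x y : R) : v y ≤ v (x * y) := by
  rw [hvmul]
  exact le_add_of_nonneg_left (valuation_nonneg hv0 hnonneg x)

theorem valuation_le_valuation_mul_right (hv0 : ∀ x : R, v x = ⊤ ↔ x = 0)
    (hvmul : ∀ x y : R, v (x * y) = v x + v y) (hnonneg : ∀ x : R, x ≠ 0 → 0 ≤ v x)
    (x y : R) : v x ≤ v (x * y) := by
  rw [hvmul]
  exact le_add_of_nonneg_right (valuation_nonneg hv0 hnonneg y)

def valuationGeIdeal (v : R → WithTop ℤ) (m : WithTop ℤ) (hv0 : ∀ x : R, v x = ⊤ ↔ x = 0)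
    (hvmul : ∀ x y : R, v (x * y) = v x + v y)
    (hvadd : ∀ x y : R, min (v x) (v y) ≤ v (x + y))
    (hnonneg : ∀ x : R, x ≠ 0 → 0 ≤ v x) : TwoSidedIdeal R :=
  have mul_mem_left {x y : R} (hy : m ≤ v y) : m ≤ v (x * y) :=
    hy.trans (valuation_le_valuation_mul_left hv0 hvmul hnonneg x y)
  TwoSidedIdeal.mk' {x | m ≤ v x}
    (by simp only [Set.mem_ofPred_eq, (hv0 0).2 rfl, le_top])
    (fun hx hy => (le_min hx hy).trans (hvadd _ _))
    (fun {x} hx => neg_one_mul x ▸ mul_mem_left hx)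
    mul_mem_left
    (fun {x y} hx => hx.trans (valuation_le_valuation_mul_right hv0 hvmul hnonneg x y))

theorem mem_valuationGeIdeal {m : WithTop ℤ} (hv0 : ∀ x : R, v x = ⊤ ↔ x = 0)
    (hvmul : ∀ x y : R, v (x * y) = v x + v y)
    (hvadd : ∀ x y : R, min (v x) (v y) ≤ v (x + y))
    (hnonneg : ∀ x : R, x ≠ 0 → 0 ≤ v x) (x : R) :
    x ∈ valuationGeIdeal v m hv0 hvmul hvadd hnonneg ↔ m ≤ v x := by
  simp [valuationGeIdeal]

end ValuationIdeal

theorem valuation_subsequence_multiples_general {R : Type*} [Ring R]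
    (v : R → WithTop ℤ)
    (hv0 : ∀ x : R, v x = ⊤ ↔ x = 0)
    (hvmul : ∀ x y : R, v (x * y) = v x + v y)
    (hvadd : ∀ x y : R, min (v x) (v y) ≤ v (x + y))
    (hnonneg : ∀ x : R, x ≠ 0 → 0 ≤ v x)
    (Γ : Subgroup Rˣ)
    (σ : R) (m : ℕ)
    (s : ℕ) (hs : 0 < s)
    (hsm : ∃ γ : Rˣ, γ ∈ Γ ∧ (m : WithTop ℤ) ≤ v (σ ^ s - (γ : R)))
    (hleast : ∀ s' : ℕ, 0 < s' →
      (∃ γ : Rˣ, γ ∈ Γ ∧ (m : WithTop ℤ) ≤ v (σ ^ s' - (γ : R))) → s ≤ s') :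
    ∀ n : ℕ, 1 ≤ n →
      ((∃ γ : Rˣ, γ ∈ Γ ∧ (m : WithTop ℤ) ≤ v (σ ^ n - (γ : R))) ↔ s ∣ n) := by
  intro n _
  let I := valuationGeIdeal v m hv0 hvmul hvadd hnonneg
  let π : R →+* I.ringCon.Quotient := I.ringCon.mk'
  have hcongr (k : ℕ) :
      (∃ γ : Rˣ, γ ∈ Γ ∧ (m : WithTop ℤ) ≤ v (σ ^ k - (γ : R))) ↔
        ∃ h : I.ringCon.Quotientˣ, h ∈ Γ.map (Units.map (π : R →* _)) ∧ π σ ^ k = h := by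
    simp only [Subgroup.mem_map, exists_exists_and_eq_and, Units.coe_map, ← map_pow]
    refine exists_congr fun γ => and_congr_right fun _ => ?_
    rw [MonoidHom.coe_coe, RingCon.coe_mk', RingCon.eq, TwoSidedIdeal.rel_iff]
    exact (mem_valuationGeIdeal ..).symm
  simp only [hcongr] at hsm hleast ⊢
  exact exists_mem_pow_eq_iff_dvd hs hsm hleast n

/-- If s is the least positive integer with v(σ^s − γ) ≥ m for some γ in a finite subgroup Γ
of units, then for n ≥ 1 there exists γ ∈ Γ with v(σⁿ − γ) ≥ m if and only if s ∣ n. -/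
theorem valuation_subsequence_multiples {R : Type*} [Ring R]
    (v : R → WithTop ℤ)
    (hv0 : ∀ x : R, v x = ⊤ ↔ x = 0)
    (hvmul : ∀ x y : R, v (x * y) = v x + v y)
    (hvadd : ∀ x y : R, min (v x) (v y) ≤ v (x + y))
    (hnonneg : ∀ x : R, x ≠ 0 → 0 ≤ v x)
    (Γ : Subgroup Rˣ) (hΓfin : (Γ : Set Rˣ).Finite)
    (σ : R) (m : ℕ)
    (s : ℕ) (hs : 0 < s)
    (hsm : ∃ γ : Rˣ, γ ∈ Γ ∧ (m : WithTop ℤ) ≤ v (σ ^ s - (γ : R)))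
    (hleast : ∀ s' : ℕ, 0 < s' →
      (∃ γ : Rˣ, γ ∈ Γ ∧ (m : WithTop ℤ) ≤ v (σ ^ s' - (γ : R))) → s ≤ s') :
    ∀ n : ℕ, 1 ≤ n →
      ((∃ γ : Rˣ, γ ∈ Γ ∧ (m : WithTop ℤ) ≤ v (σ ^ n - (γ : R))) ↔ s ∣ n) :=
  valuation_subsequence_multiples_general v hv0 hvmul hvadd hnonneg Γ σ m s hs hsm hleast
end

section
/- Let p be a prime and β a real number with 0 < β < 1, and for n ≥ 1 set b_n = β^{p^{v_p(n)}} (that is, b_n = β^{|n|_p^{−1}}). Then: (1) the series H(z) = ∑_{n≥1} b_n z^n converges for every complex z with |z| < 1, and its radius of convergence is exactly 1; (2) the holomorphic function H on the open unit disk has the unit circle as natural boundary: for every complex w with |w| = 1 and every ε > 0 there is no holomorphic function g on the open ball B(w, ε) with g(z) = H(z) for all z ∈ B(w, ε) ∩ B(0, 1). -/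
/-!
Telescoping β^(p^v) = ∑_{j ≤ v} c_j, with c_0 = β and c_j = β^(p^j) - β^(p^(j-1)) < 0 for
j ≥ 1 (`Hbeta.jump`), turns H into the Lambert-type series ∑_j c_j z^(p^j) / (1 - z^(p^j)).
Let ζ be a primitive p^(k+1)-th root of unity. The terms j ≤ k form a function continuous at ζ;
the remaining coefficients live on multiples n of p^(k+1), where ζ^n = 1, and there they are
real and at most c_(k+1). Hence Re H(rζ) ≤ O(1) + c_(k+1) r^(p^(k+1)) / (1 - r^(p^(k+1))) → -∞
as r → 1⁻. Such ζ are dense in the unit circle, so H has no continuous extension across any arc.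
-/

open Filter Topology Complex
open scoped Real

theorem hasSum_ite_dvd_pow {𝕜 : Type*} [NormedField 𝕜] [CompleteSpace 𝕜] {q : ℕ} (hq : q ≠ 0)
    {z : 𝕜} (hz : ‖z‖ < 1) :
    HasSum (fun n : ℕ => if q ∣ n ∧ n ≠ 0 then z ^ n else 0) (z ^ q / (1 - z ^ q)) := by
  have hzq : ‖z ^ q‖ < 1 := by
    rw [norm_pow]; exact pow_lt_one₀ (norm_nonneg z) hz hq
  have hinj : Function.Injective (fun m : ℕ => q * (m + 1)) := fun a b h => by
    simpa using Nat.eq_of_mul_eq_mul_left (Nat.pos_of_ne_zero hq) h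
  have hsupp : ∀ n ∉ Set.range (fun m : ℕ => q * (m + 1)),
      (if q ∣ n ∧ n ≠ 0 then z ^ n else 0) = 0 := by
    rintro n hn
    rw [if_neg]
    rintro ⟨⟨m, rfl⟩, hm⟩
    obtain ⟨m, rfl⟩ := Nat.exists_eq_succ_of_ne_zero (right_ne_zero_of_mul hm)
    exact hn ⟨m, rfl⟩
  rw [← hinj.hasSum_iff hsupp, div_eq_mul_inv]
  refine ((hasSum_geometric_of_norm_lt_one hzq).mul_left (z ^ q)).congr_fun fun m => ?_
  simp [hq, pow_mul, pow_succ, mul_comm]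

theorem tendsto_pow_div_one_sub_pow_nhdsLT_one {q : ℕ} (hq : q ≠ 0) :
    Tendsto (fun r : ℝ => r ^ q / (1 - r ^ q)) (𝓝[<] 1) atTop := by
  have hpow : Tendsto (fun r : ℝ => r ^ q) (𝓝[<] 1) (𝓝 1) := by
    simpa using ((continuous_pow q).tendsto (1 : ℝ)).mono_left nhdsWithin_le_nhds
  have hlt : ∀ᶠ r : ℝ in 𝓝[<] 1, 0 < 1 - r ^ q := by
    filter_upwards [Ioo_mem_nhdsLT zero_lt_one] with r hr
    exact sub_pos.2 (pow_lt_one₀ hr.1.le hr.2 hq)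
  have hinv : Tendsto (fun r : ℝ => (1 - r ^ q)⁻¹) (𝓝[<] 1) atTop := by
    refine tendsto_inv_nhdsGT_zero.comp (tendsto_nhdsWithin_iff.2 ⟨?_, hlt⟩)
    simpa using (tendsto_const_nhds (x := (1 : ℝ))).sub hpow
  simpa only [div_eq_mul_inv] using hpow.pos_mul_atTop one_pos hinv

theorem tendsto_ofReal_mul_nhdsLT_one (ζ : ℂ) :
    Tendsto (fun r : ℝ => (r : ℂ) * ζ) (𝓝[<] 1) (𝓝 ζ) := by
  simpa using ((continuous_ofReal.tendsto 1).mul_const ζ).mono_left nhdsWithin_le_nhds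

theorem norm_ofReal_mul_lt_one {ζ : ℂ} (hζ : ‖ζ‖ = 1) {r : ℝ} (hr0 : 0 ≤ r) (hr1 : r < 1) :
    ‖(r : ℂ) * ζ‖ < 1 := by
  rwa [norm_mul, hζ, mul_one, norm_real, Real.norm_of_nonneg hr0]

theorem norm_exp_mul_I_sub_exp_mul_I_le (x y : ℝ) :
    ‖exp (x * I) - exp (y * I)‖ ≤ |x - y| := by
  have hsplit : exp (x * I) - exp (y * I) =
      exp (y * I) * (exp (I * ↑(x - y)) - 1) := by
    rw [mul_sub, mul_one, ← exp_add]; push_cast; ring_nf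
  rw [hsplit, norm_mul, norm_exp_ofReal_mul_I, one_mul, ← Real.norm_eq_abs]
  exact Real.norm_exp_I_mul_ofReal_sub_one_le

theorem exists_int_not_dvd_abs_sub_le_one {p : ℕ} (hp : p ≠ 1) (t : ℝ) :
    ∃ i : ℤ, ¬ (p : ℤ) ∣ i ∧ |i - t| ≤ 1 := by
  have h₁ := Int.floor_le t
  have h₂ := Int.lt_floor_add_one t
  by_cases hdvd : (p : ℤ) ∣ ⌊t⌋
  · refine ⟨⌊t⌋ + 1, fun h => hp ?_, ?_⟩
    · exact_mod_cast Int.eq_one_of_dvd_one (by positivity) ((Int.dvd_add_right hdvd).1 h)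
    · rw [abs_le]; push_cast; constructor <;> linarith
  · exact ⟨⌊t⌋, hdvd, by rw [abs_le]; constructor <;> linarith⟩

theorem exists_isPrimitiveRoot_prime_pow_dist_lt {p : ℕ} (hp : p.Prime) {w : ℂ} (hw : ‖w‖ = 1)
    {ε : ℝ} (hε : 0 < ε) : ∃ (k : ℕ) (ζ : ℂ), IsPrimitiveRoot ζ (p ^ (k + 1)) ∧ dist ζ w < ε := by
  obtain ⟨k, hk⟩ :=
    pow_unbounded_of_one_lt (2 * π / ε) (by exact_mod_cast hp.one_lt : (1 : ℝ) < p)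
  set N : ℕ := p ^ (k + 1)
  have hN : 2 * π / ε < N := by
    refine hk.trans_le ?_
    push_cast [N]
    exact pow_le_pow_right₀ (by exact_mod_cast hp.one_lt.le) k.le_succ
  have hN0 : (0 : ℝ) < N := by exact_mod_cast pow_pos hp.pos _
  obtain ⟨i, hpi, hi⟩ := exists_int_not_dvd_abs_sub_le_one hp.ne_one (w.arg * N / (2 * π))
  have hcop : IsCoprime i (N : ℤ) := by
    push_cast [N]
    exact (((Nat.prime_iff_prime_int.1 hp).coprime_iff_not_dvd).2 hpi).symm.pow_right
  refine ⟨k, _, isPrimitiveRoot_exp_of_isCoprime i N (pow_ne_zero _ hp.ne_zero) hcop, ?_⟩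
  set x : ℝ := 2 * π * i / N with hxdef
  have hx : exp (2 * π * I * (i / N)) = exp (x * I) := by
    push_cast [x]; ring_nf
  have hxw : |x - w.arg| ≤ 2 * π / N := by
    have : x - w.arg = 2 * π / N * (i - w.arg * N / (2 * π)) := by
      rw [hxdef]; field_simp
    rw [this, abs_mul, abs_of_pos (by positivity)]
    exact mul_le_of_le_one_right (by positivity) hi
  calc dist _ w = ‖exp (x * I) - exp (w.arg * I)‖ := by
        rw [dist_eq_norm, hx]
        congr
        simpa [hw] using (norm_mul_exp_arg_mul_I w).symm
    _ ≤ 2 * π / N := (norm_exp_mul_I_sub_exp_mul_I_le _ _).trans hxw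
    _ < ε := by rw [div_lt_iff₀ hε] at hN; rw [div_lt_iff₀ hN0]; linarith

namespace Hbeta

variable (p : ℕ) (β : ℝ)

noncomputable def coeff (n : ℕ) : ℝ := if n = 0 then 0 else β ^ p ^ padicValNat p n

noncomputable def jump : ℕ → ℝ
  | 0 => β
  | j + 1 => β ^ p ^ (j + 1) - β ^ p ^ j

noncomputable def headCoeff (k n : ℕ) : ℝ :=
  ∑ j ∈ Finset.range (k + 1), if p ^ j ∣ n ∧ n ≠ 0 then jump p β j else 0

noncomputable def head (k : ℕ) (z : ℂ) : ℂ :=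
  ∑ j ∈ Finset.range (k + 1), (jump p β j : ℂ) * (z ^ p ^ j / (1 - z ^ p ^ j))

variable {p β}

theorem sum_range_jump (v : ℕ) : ∑ j ∈ Finset.range (v + 1), jump p β j = β ^ p ^ v := by
  induction v with
  | zero => simp [jump]
  | succ v ih => rw [Finset.sum_range_succ, ih, jump]; ring

theorem jump_succ_neg (hp : 1 < p) (hβ0 : 0 < β) (hβ1 : β < 1) (k : ℕ) : jump p β (k + 1) < 0 :=
  sub_neg.2 (pow_lt_pow_right_of_lt_one₀ hβ0 hβ1 (Nat.pow_lt_pow_right hp k.lt_succ_self))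

theorem coeff_of_not_dvd {n : ℕ} (h : ¬ p ∣ n) : coeff p β n = β := by
  rw [coeff, if_neg (by rintro rfl; exact h (dvd_zero p)), padicValNat.eq_zero_of_not_dvd h,
    pow_zero, pow_one]

theorem norm_coeff_le_one (hβ0 : 0 ≤ β) (hβ1 : β ≤ 1) (n : ℕ) : ‖coeff p β n‖ ≤ 1 := by
  unfold coeff
  split_ifs
  · simp
  · rw [Real.norm_of_nonneg (by positivity)]
    exact pow_le_one₀ hβ0 hβ1

theorem headCoeff_of_ne_zero [Fact p.Prime] (k : ℕ) {n : ℕ} (hn : n ≠ 0) :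
    headCoeff p β k n = β ^ p ^ min (padicValNat p n) k := by
  have hfilter : {j ∈ Finset.range (k + 1) | p ^ j ∣ n ∧ n ≠ 0} =
      Finset.range (min (padicValNat p n) k + 1) := by
    ext j
    simp only [Finset.mem_filter, Finset.mem_range, padicValNat_dvd_iff_le hn, ne_eq, hn,
      not_false_eq_true, and_true]
    omega
  rw [headCoeff, ← Finset.sum_filter, hfilter, sum_range_jump]

theorem coeff_sub_headCoeff_of_not_dvd [Fact p.Prime] {k n : ℕ} (h : ¬ p ^ (k + 1) ∣ n) :
    coeff p β n - headCoeff p β k n = 0 := by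
  have hn : n ≠ 0 := by rintro rfl; exact h (dvd_zero _)
  have hv : padicValNat p n ≤ k := by
    by_contra! hv
    exact h ((padicValNat_dvd_iff_le hn).2 hv)
  rw [headCoeff_of_ne_zero k hn, min_eq_left hv, coeff, if_neg hn, sub_self]

theorem coeff_sub_headCoeff_le_jump [Fact p.Prime] (hβ0 : 0 ≤ β) (hβ1 : β ≤ 1) {k n : ℕ}
    (hn : n ≠ 0) (h : p ^ (k + 1) ∣ n) :
    coeff p β n - headCoeff p β k n ≤ jump p β (k + 1) := by
  have hv : k + 1 ≤ padicValNat p n := (padicValNat_dvd_iff_le hn).1 h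
  rw [headCoeff_of_ne_zero k hn, min_eq_right (by omega), coeff, if_neg hn, jump]
  exact sub_le_sub_right
    (pow_le_pow_of_le_one hβ0 hβ1 (Nat.pow_le_pow_right (Fact.out : p.Prime).pos hv)) _

theorem hasSum_headCoeff_mul_pow (hp : p ≠ 0) (k : ℕ) {z : ℂ} (hz : ‖z‖ < 1) :
    HasSum (fun n => (headCoeff p β k n : ℂ) * z ^ n) (head p β k z) := by
  refine (hasSum_sum fun j _ => (hasSum_ite_dvd_pow (pow_ne_zero j hp) hz).mul_left
    (jump p β j : ℂ)).congr_fun fun n => ?_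
  simp only [headCoeff, ofReal_sum, Finset.sum_mul]
  refine Finset.sum_congr rfl fun j _ => ?_
  split_ifs <;> simp

theorem continuousAt_head (hp : 1 < p) {k : ℕ} {ζ : ℂ} (hζ : IsPrimitiveRoot ζ (p ^ (k + 1))) :
    ContinuousAt (head p β k) ζ := by
  refine tendsto_finsetSum _ fun j hj => ?_
  have hζj : 1 - ζ ^ p ^ j ≠ 0 := by
    rw [sub_ne_zero, ne_comm, Ne, hζ.pow_eq_one_iff_dvd, Nat.pow_dvd_pow_iff_le_right hp]
    simpa using hj
  exact (show ContinuousAt _ ζ by fun_prop (disch := exact hζj))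

theorem summable_coeff_mul_pow (hβ0 : 0 ≤ β) (hβ1 : β ≤ 1) {z : ℂ} (hz : ‖z‖ < 1) :
    Summable fun n => (coeff p β n : ℂ) * z ^ n :=
  Summable.of_norm_bounded (summable_geometric_of_lt_one (norm_nonneg z) hz) fun n => by
    rw [norm_mul, norm_pow, norm_real]
    exact mul_le_of_le_one_left (by positivity) (norm_coeff_le_one hβ0 hβ1 n)

theorem not_summable_coeff_mul_pow (hp : 1 < p) (hβ0 : 0 < β) {z : ℂ} (hz : 1 ≤ ‖z‖) :
    ¬ Summable fun n => (coeff p β n : ℂ) * z ^ n := by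
  intro hsum
  obtain ⟨N, hN⟩ := eventually_atTop.1
    (hsum.tendsto_atTop_zero.norm.eventually (gt_mem_nhds (by simpa using hβ0)))
  have hndvd : ¬ p ∣ p * N + 1 := fun h =>
    hp.ne' (Nat.dvd_one.1 ((Nat.dvd_add_right (dvd_mul_right p N)).1 h))
  have hlt := hN (p * N + 1) (by nlinarith)
  rw [coeff_of_not_dvd hndvd, norm_mul, norm_pow, norm_real,
    Real.norm_of_nonneg hβ0.le] at hlt
  exact hlt.not_ge (le_mul_of_one_le_right hβ0.le (one_le_pow₀ hz))

theorem re_coeff_sub_headCoeff_mul_pow_le [Fact p.Prime] (hβ0 : 0 ≤ β) (hβ1 : β ≤ 1) {k : ℕ}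
    {ζ : ℂ} (hζ : IsPrimitiveRoot ζ (p ^ (k + 1))) {r : ℝ} (hr : 0 ≤ r) (n : ℕ) :
    (((coeff p β n - headCoeff p β k n : ℝ) : ℂ) * (r * ζ) ^ n).re ≤
      jump p β (k + 1) * if p ^ (k + 1) ∣ n ∧ n ≠ 0 then r ^ n else 0 := by
  by_cases hdvd : p ^ (k + 1) ∣ n
  · by_cases hn : n = 0
    · simp [hn, coeff, headCoeff]
    have hζn : ζ ^ n = 1 := (hζ.pow_eq_one_iff_dvd n).2 hdvd
    rw [if_pos ⟨hdvd, hn⟩, mul_pow, hζn, mul_one, ← ofReal_pow, ← ofReal_mul,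
      ofReal_re]
    exact mul_le_mul_of_nonneg_right (coeff_sub_headCoeff_le_jump hβ0 hβ1 hn hdvd)
      (pow_nonneg hr n)
  · simp [coeff_sub_headCoeff_of_not_dvd hdvd, hdvd]

theorem re_tsum_coeff_mul_pow_le (hp : p.Prime) (hβ0 : 0 < β) (hβ1 : β < 1) {k : ℕ} {ζ : ℂ}
    (hζ : IsPrimitiveRoot ζ (p ^ (k + 1))) {r : ℝ} (hr0 : 0 ≤ r) (hr1 : r < 1) :
    (∑' n, (coeff p β n : ℂ) * (r * ζ) ^ n).re ≤
      (head p β k (r * ζ)).re + jump p β (k + 1) * (r ^ p ^ (k + 1) / (1 - r ^ p ^ (k + 1))) := by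
  have : Fact p.Prime := ⟨hp⟩
  have hz := norm_ofReal_mul_lt_one (hζ.norm'_eq_one (pow_ne_zero _ hp.ne_zero)) hr0 hr1
  have htail : HasSum (fun n => ((coeff p β n - headCoeff p β k n : ℝ) : ℂ) * (r * ζ) ^ n)
      (∑' n, (coeff p β n : ℂ) * (r * ζ) ^ n - head p β k (r * ζ)) := by
    simpa only [ofReal_sub, sub_mul] using
      (summable_coeff_mul_pow hβ0.le hβ1.le hz).hasSum.sub
        (hasSum_headCoeff_mul_pow hp.ne_zero k hz)
  have hpole := (hasSum_ite_dvd_pow (pow_ne_zero (k + 1) hp.ne_zero)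
    (by rwa [Real.norm_of_nonneg hr0] : ‖r‖ < 1)).mul_left (jump p β (k + 1))
  have hle := hasSum_le (re_coeff_sub_headCoeff_mul_pow_le hβ0.le hβ1.le hζ hr0)
    (hasSum_re htail) hpole
  rw [sub_re] at hle
  linarith

theorem tendsto_re_tsum_coeff_mul_pow_atBot (hp : p.Prime) (hβ0 : 0 < β) (hβ1 : β < 1) {k : ℕ}
    {ζ : ℂ} (hζ : IsPrimitiveRoot ζ (p ^ (k + 1))) :
    Tendsto (fun r : ℝ => (∑' n, (coeff p β n : ℂ) * (r * ζ) ^ n).re) (𝓝[<] 1) atBot := by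
  have hhead : Tendsto (fun r : ℝ => (head p β k (r * ζ)).re) (𝓝[<] 1) (𝓝 (head p β k ζ).re) :=
    (continuous_re.tendsto _).comp
      ((continuousAt_head hp.one_lt hζ).tendsto.comp (tendsto_ofReal_mul_nhdsLT_one ζ))
  have hpole := (tendsto_pow_div_one_sub_pow_nhdsLT_one (pow_ne_zero (k + 1) hp.ne_zero)
    ).const_mul_atTop_of_neg (jump_succ_neg hp.one_lt hβ0 hβ1 k)
  refine tendsto_atBot_mono' _ ?_ (hhead.add_atBot hpole)
  filter_upwards [Ioo_mem_nhdsLT zero_lt_one] with r hr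
  exact re_tsum_coeff_mul_pow_le hp hβ0 hβ1 hζ hr.1.le hr.2

end Hbeta

/-- The series H_β(z) = ∑_{n≥1} β^{|n|_p^{-1}} zⁿ has radius of convergence 1 and has the
unit circle as a natural boundary. -/
theorem Hbeta_natural_boundary (p : ℕ) (hp : p.Prime) (β : ℝ) (hβ0 : 0 < β) (hβ1 : β < 1)
    (b : ℕ → ℝ)
    (hb : ∀ n : ℕ, b n = if n = 0 then 0 else β ^ (p ^ padicValNat p n)) :
    (∀ z : ℂ, ‖z‖ < 1 → Summable (fun n : ℕ => (b n : ℂ) * z ^ n)) ∧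
    (∀ z : ℂ, 1 < ‖z‖ → ¬ Summable (fun n : ℕ => (b n : ℂ) * z ^ n)) ∧
    (∀ w : ℂ, ‖w‖ = 1 → ∀ ε : ℝ, 0 < ε →
      ¬ ∃ g : ℂ → ℂ, DifferentiableOn ℂ g (Metric.ball w ε) ∧
        ∀ z ∈ Metric.ball w ε ∩ Metric.ball (0 : ℂ) 1,
          g z = ∑' n : ℕ, (b n : ℂ) * z ^ n) := by
  obtain rfl : b = Hbeta.coeff p β := funext hb
  refine ⟨fun z => Hbeta.summable_coeff_mul_pow hβ0.le hβ1.le,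
    fun z hz => Hbeta.not_summable_coeff_mul_pow hp.one_lt hβ0 hz.le, ?_⟩
  rintro w hw ε hε ⟨g, hg, hgH⟩
  obtain ⟨k, ζ, hζ, hζw⟩ := exists_isPrimitiveRoot_prime_pow_dist_lt hp hw hε
  have hradial := tendsto_ofReal_mul_nhdsLT_one ζ
  have hball : Metric.ball w ε ∈ 𝓝 ζ := Metric.isOpen_ball.mem_nhds hζw
  have hgζ : Tendsto (fun r : ℝ => g (r * ζ)) (𝓝[<] 1) (𝓝 (g ζ)) :=
    (hg.continuousOn.continuousAt hball).tendsto.comp hradial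
  have hagree : ∀ᶠ r : ℝ in 𝓝[<] 1, g (r * ζ) = ∑' n, (Hbeta.coeff p β n : ℂ) * (r * ζ) ^ n := by
    filter_upwards [hradial.eventually hball, Ioo_mem_nhdsLT zero_lt_one] with r hrw hr
    exact hgH _ ⟨hrw, mem_ball_zero_iff.2 (norm_ofReal_mul_lt_one
      (hζ.norm'_eq_one (pow_ne_zero _ hp.ne_zero)) hr.1.le hr.2)⟩
  exact not_tendsto_atBot_of_tendsto_nhds
    ((continuous_re.tendsto _).comp (hgζ.congr' hagree))
    (Hbeta.tendsto_re_tsum_coeff_mul_pow_atBot hp hβ0 hβ1 hζ)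
end

section
/- Let p be a prime, (a_n)_{n≥1} a sequence of complex numbers, and ρ > 0 such that the series ∑_{n≥1} a_n z^n/n converges absolutely for every |z| < ρ. Suppose there are polynomials P, Q ∈ ℂ[z] with Q nonvanishing on the disk {|z| < ρ} such that exp(∑_{n≥1} a_n z^n/n) = P(z)/Q(z) for all |z| < ρ. Then the p-th power of the tame series is rational on the same disk: there exist polynomials A, B ∈ ℂ[z] with B nonvanishing on {|z| < ρ} such that exp(∑_{n≥1, p∤n} a_n z^n/n)^p = A(z)/B(z) for all |z| < ρ. More precisely, with ζ = e^{2πi/p}, for all |z| < ρ one has exp(∑_{p∤n} a_n z^n/n)^p · ∏_{j=0}^{p−1} exp(∑_{n≥1} a_n (ζ^j z)^n/n) = exp(∑_{n≥1} a_n z^n/n)^{2p}·exp(∑_{n≥1} a_n z^n/n)^{−p}, i.e. F*(z)^p · ∏_{j=1}^{p−1} F(ζ^j z) = F(z)^{p−1}, where F(z) = exp(∑ a_n z^n/n) and F*(z) = exp(∑_{p∤n} a_n z^n/n). -/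
/-!
Rotating the variable by the powers of a primitive `p`-th root of unity `ζ` filters the
coefficients: `∑_{j<p} ζ^{jn} = p` if `p ∣ n` and `0` otherwise. Hence, termwise,
`p · log F*(z) + ∑_{j<p} log F(ζ^j z) = p · log F(z)`, which exponentiates to
`F*(z)^p · ∏_{j<p} F(ζ^j z) = F(z)^p`; cancelling the factor `j = 0` gives the stated identity.
Rotations preserve the disk and `F = P/Q` has no zeros there, so
`F*^p = F^{p-1} / ∏_{j=1}^{p-1} F(ζ^j ·)` is rational on the disk.
-/

open Finset Polynomial

def IsRationalOn {K : Type*} [Field K] (f : K → K) (s : Set K) : Prop :=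
  ∃ A B : K[X], (∀ z ∈ s, B.eval z ≠ 0) ∧ ∀ z ∈ s, f z = A.eval z / B.eval z

namespace IsRationalOn

variable {K : Type*} [Field K] {f g : K → K} {s : Set K}

theorem congr (hf : IsRationalOn f s) (hfg : Set.EqOn f g s) : IsRationalOn g s := by
  obtain ⟨A, B, hB, hAB⟩ := hf
  exact ⟨A, B, hB, fun z hz => (hfg hz).symm.trans (hAB z hz)⟩

theorem one : IsRationalOn (1 : K → K) s :=
  ⟨1, 1, by simp, by simp⟩

theorem mul (hf : IsRationalOn f s) (hg : IsRationalOn g s) : IsRationalOn (f * g) s := by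
  obtain ⟨A, B, hB, hAB⟩ := hf
  obtain ⟨C, D, hD, hCD⟩ := hg
  refine ⟨A * C, B * D, fun z hz => by simp [hB z hz, hD z hz], fun z hz => ?_⟩
  simp only [Pi.mul_apply, hAB z hz, hCD z hz, eval_mul, div_mul_div_comm]

theorem pow (hf : IsRationalOn f s) (n : ℕ) : IsRationalOn (f ^ n) s := by
  induction n with
  | zero => simpa using one
  | succ n ih => simpa [pow_succ] using ih.mul hf

theorem prod {ι : Type*} {t : Finset ι} {f : ι → K → K} (hf : ∀ i ∈ t, IsRationalOn (f i) s) :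
    IsRationalOn (∏ i ∈ t, f i) s := by
  classical
  induction t using Finset.induction_on with
  | empty => simpa using one
  | insert i t hi ih =>
    rw [prod_insert hi]
    exact (hf i (mem_insert_self i t)).mul (ih fun j hj => hf j (mem_insert_of_mem hj))

theorem inv (hf : IsRationalOn f s) (hf0 : ∀ z ∈ s, f z ≠ 0) : IsRationalOn f⁻¹ s := by
  obtain ⟨A, B, hB, hAB⟩ := hf
  refine ⟨B, A, fun z hz h => hf0 z hz (by simp [hAB z hz, h]), fun z hz => ?_⟩
  simp [hAB z hz]

theorem div (hf : IsRationalOn f s) (hg : IsRationalOn g s) (hg0 : ∀ z ∈ s, g z ≠ 0) :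
    IsRationalOn (f / g) s := by
  simpa [div_eq_mul_inv] using hf.mul (hg.inv hg0)

theorem comp_const_mul (hf : IsRationalOn f s) {c : K} (hc : Set.MapsTo (c * ·) s s) :
    IsRationalOn (fun z => f (c * z)) s := by
  obtain ⟨A, B, hB, hAB⟩ := hf
  refine ⟨A.comp (C c * X), B.comp (C c * X), fun z hz => ?_, fun z hz => ?_⟩
  · simpa using hB _ (hc hz)
  · simpa using hAB _ (hc hz)

end IsRationalOn

theorem IsPrimitiveRoot.sum_range_pow_pow {R : Type*} [CommRing R] [IsDomain R] {ζ : R} {k : ℕ}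
    (hζ : IsPrimitiveRoot ζ k) (n : ℕ) :
    ∑ j ∈ range k, (ζ ^ n) ^ j = if k ∣ n then (k : R) else 0 := by
  split_ifs with hkn
  · simp [(hζ.pow_eq_one_iff_dvd n).2 hkn]
  · have hne : ζ ^ n - 1 ≠ 0 := sub_ne_zero.2 ((hζ.pow_eq_one_iff_dvd n).not.2 hkn)
    have hpow : (ζ ^ n) ^ k = 1 := by rw [← pow_mul, mul_comm, pow_mul, hζ.pow_eq_one, one_pow]
    exact (mul_eq_zero.1 ((geom_sum_mul _ _).trans (sub_eq_zero.2 hpow))).resolve_right hne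

theorem IsPrimitiveRoot.mul_tame_add_sum_range {R : Type*} [CommRing R] [IsDomain R] {ζ : R}
    {k : ℕ} (hζ : IsPrimitiveRoot ζ k) (n : ℕ) (c : R) :
    k * (if ¬ k ∣ n then c else 0) + ∑ j ∈ range k, (ζ ^ n) ^ j * c = k * c := by
  rw [← sum_mul, hζ.sum_range_pow_pow]
  split_ifs <;> simp

open Complex in
theorem exp_tame_pow_mul_prod_range {p : ℕ} (hp : p ≠ 0) {ζ : ℂ} (hζ : IsPrimitiveRoot ζ p)
    {a : ℕ → ℂ} {z : ℂ} (hz : Summable fun n : ℕ => ‖a n * z ^ n / n‖) :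
    exp (∑' n : ℕ, if ¬ p ∣ n then a n * z ^ n / n else 0) ^ p *
        ∏ j ∈ range p, exp (∑' n : ℕ, a n * (ζ ^ j * z) ^ n / n)
      = exp (∑' n : ℕ, a n * z ^ n / n) ^ p := by
  have hrot : ∀ j n, a n * (ζ ^ j * z) ^ n / n = (ζ ^ n) ^ j * (a n * z ^ n / n) := fun j n => by
    rw [mul_pow, ← pow_mul, ← pow_mul, mul_comm j n]
    ring
  have hζ1 : ‖ζ‖ = 1 := hζ.norm'_eq_one hp
  have hsum_rot : ∀ j, Summable fun n : ℕ => a n * (ζ ^ j * z) ^ n / n := fun j =>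
    Summable.of_norm (by simpa only [hrot, norm_mul, norm_pow, hζ1, one_pow, one_mul] using hz)
  have hsum_tame : Summable fun n : ℕ => if ¬ p ∣ n then a n * z ^ n / n else 0 :=
    Summable.of_norm_bounded hz fun n => by split_ifs <;> simp only [le_rfl, norm_zero, norm_nonneg]
  rw [← exp_nat_mul, ← exp_nat_mul, ← exp_sum, ← exp_add, ← tsum_mul_left, ← tsum_mul_left,
    ← Summable.tsum_finsetSum fun j _ => hsum_rot j,
    ← (hsum_tame.mul_left _).tsum_add (summable_sum fun j _ => hsum_rot j)]
  simp only [hrot, hζ.mul_tame_add_sum_range]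

open Complex in
theorem exp_tame_pow_mul_prod_Icc {p : ℕ} (hp : p ≠ 0) {ζ : ℂ} (hζ : IsPrimitiveRoot ζ p)
    {a : ℕ → ℂ} {z : ℂ} (hz : Summable fun n : ℕ => ‖a n * z ^ n / n‖) :
    exp (∑' n : ℕ, if ¬ p ∣ n then a n * z ^ n / n else 0) ^ p *
        ∏ j ∈ Icc 1 (p - 1), exp (∑' n : ℕ, a n * (ζ ^ j * z) ^ n / n)
      = exp (∑' n : ℕ, a n * z ^ n / n) ^ (p - 1) := by
  have hrange : range p = insert 0 (Icc 1 (p - 1)) := by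
    ext j; simp only [mem_range, mem_insert, mem_Icc]; omega
  apply mul_left_cancel₀ (exp_ne_zero (∑' n : ℕ, a n * z ^ n / n))
  calc
    _ = exp (∑' n : ℕ, if ¬ p ∣ n then a n * z ^ n / n else 0) ^ p *
          ∏ j ∈ range p, exp (∑' n : ℕ, a n * (ζ ^ j * z) ^ n / n) := by
      rw [hrange, prod_insert (by simp)]
      simp only [pow_zero, one_mul]
      ring
    _ = _ := by
      rw [exp_tame_pow_mul_prod_range hp hζ hz, ← pow_succ',
        Nat.sub_add_cancel (Nat.one_le_iff_ne_zero.2 hp)]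

open Complex in
theorem tame_power_rational_general (p : ℕ) (hp : p.Prime) (a : ℕ → ℂ) (ρ : ℝ)
    (hconv : ∀ z : ℂ, ‖z‖ < ρ → Summable (fun n : ℕ => ‖a n * z ^ n / n‖))
    (P Q : Polynomial ℂ) (hQ : ∀ z : ℂ, ‖z‖ < ρ → Q.eval z ≠ 0)
    (hPQ : ∀ z : ℂ, ‖z‖ < ρ →
      Complex.exp (∑' n : ℕ, a n * z ^ n / n) = P.eval z / Q.eval z) :
    (∃ A B : Polynomial ℂ, (∀ z : ℂ, ‖z‖ < ρ → B.eval z ≠ 0) ∧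
      ∀ z : ℂ, ‖z‖ < ρ →
        Complex.exp (∑' n : ℕ, if ¬ p ∣ n then a n * z ^ n / n else 0) ^ p
          = A.eval z / B.eval z) ∧
    (∀ z : ℂ, ‖z‖ < ρ →
      Complex.exp (∑' n : ℕ, if ¬ p ∣ n then a n * z ^ n / n else 0) ^ p *
        ∏ j ∈ Finset.Icc 1 (p - 1),
          Complex.exp (∑' n : ℕ,
            a n * (Complex.exp (2 * Real.pi * Complex.I / p) ^ j * z) ^ n / n)
        = Complex.exp (∑' n : ℕ, a n * z ^ n / n) ^ (p - 1)) := by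
  set ζ := exp (2 * Real.pi * I / p)
  have hζ : IsPrimitiveRoot ζ p := isPrimitiveRoot_exp p hp.ne_zero
  have hid z (hz : ‖z‖ < ρ) := exp_tame_pow_mul_prod_Icc hp.ne_zero hζ (hconv z hz)
  refine ⟨?_, hid⟩
  set F : ℂ → ℂ := fun z => exp (∑' n : ℕ, a n * z ^ n / n)
  have hF : IsRationalOn F (Metric.ball 0 ρ) :=
    ⟨P, Q, fun z hz => hQ z (mem_ball_zero_iff.1 hz), fun z hz => hPQ z (mem_ball_zero_iff.1 hz)⟩
  have hrot (j : ℕ) : Set.MapsTo (ζ ^ j * ·) (Metric.ball 0 ρ) (Metric.ball 0 ρ) := fun z hz => by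
    simpa [hζ.norm'_eq_one hp.ne_zero] using hz
  have hquot := (hF.pow (p - 1)).div
    (IsRationalOn.prod (t := Icc 1 (p - 1)) fun j _ => hF.comp_const_mul (hrot j))
    fun z _ => by simp [F, prod_ne_zero_iff, exp_ne_zero]
  obtain ⟨A, B, hB, hAB⟩ := hquot.congr
    (g := fun z => exp (∑' n : ℕ, if ¬ p ∣ n then a n * z ^ n / n else 0) ^ p) fun z hz => by
      simp only [Pi.div_apply, Pi.pow_apply, prod_apply]
      exact (eq_div_of_mul_eq (by simp [prod_ne_zero_iff, exp_ne_zero])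
        (hid z (mem_ball_zero_iff.1 hz))).symm
  exact ⟨A, B, fun z hz => hB z (mem_ball_zero_iff.2 hz),
    fun z hz => hAB z (mem_ball_zero_iff.2 hz)⟩

open Complex in
/-- If F(z) = exp(∑ aₙ zⁿ/n) is rational on a disk, then the p-th power of its tame
variant F*(z) = exp(∑_{p∤n} aₙ zⁿ/n) is rational on the same disk; more precisely,
F*(z)^p · ∏_{j=1}^{p−1} F(ζ^j z) = F(z)^{p−1} with ζ = e^{2πi/p}. -/
theorem tame_power_rational (p : ℕ) (hp : p.Prime) (a : ℕ → ℂ) (ρ : ℝ) (hρ : 0 < ρ)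
    (hconv : ∀ z : ℂ, ‖z‖ < ρ → Summable (fun n : ℕ => ‖a n * z ^ n / n‖))
    (P Q : Polynomial ℂ) (hQ : ∀ z : ℂ, ‖z‖ < ρ → Q.eval z ≠ 0)
    (hPQ : ∀ z : ℂ, ‖z‖ < ρ →
      Complex.exp (∑' n : ℕ, a n * z ^ n / n) = P.eval z / Q.eval z) :
    (∃ A B : Polynomial ℂ, (∀ z : ℂ, ‖z‖ < ρ → B.eval z ≠ 0) ∧
      ∀ z : ℂ, ‖z‖ < ρ →
        Complex.exp (∑' n : ℕ, if ¬ p ∣ n then a n * z ^ n / n else 0) ^ p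
          = A.eval z / B.eval z) ∧
    (∀ z : ℂ, ‖z‖ < ρ →
      Complex.exp (∑' n : ℕ, if ¬ p ∣ n then a n * z ^ n / n else 0) ^ p *
        ∏ j ∈ Finset.Icc 1 (p - 1),
          Complex.exp (∑' n : ℕ,
            a n * (Complex.exp (2 * Real.pi * Complex.I / p) ^ j * z) ^ n / n)
        = Complex.exp (∑' n : ℕ, a n * z ^ n / n) ^ (p - 1)) :=
  tame_power_rational_general p hp a ρ hconv P Q hQ hPQ
end

section
/- Let p > 2 be a prime, K an algebraically closed field of characteristic p, and m ≥ 2 an integer. For n ≥ 1 let f_n := 1 + #{x ∈ K : x^{m^n} = x}, the number of fixed points of the n-th iterate of the power map x ↦ x^m on the projective line over K (the added 1 accounts for the point at infinity). Write ζ*_pt(w) = (1 − w^p)^{1/p}/(1 − w) for real 0 < w < 1. Then for every real z with 0 < z < 1/m: (a) if p divides m, then exp(∑_{n≥1, p∤n} f_n z^n/n) = ζ*_pt(mz)·ζ*_pt(z) = (1−(mz)^p)^{1/p}(1−z^p)^{1/p}/((1−mz)(1−z)); (b) if p does not divide m, then, letting s be the multiplicative order of m modulo p, e := v_p(m^s −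 1), and β := (p^{−e} − 1)/s, one has exp(∑_{n≥1, p∤n} f_n z^n/n) = ζ*_pt(mz)·ζ*_pt(z)·(ζ*_pt((mz)^s)/ζ*_pt(z^s))^β, where all real powers are real powers of positive real numbers. -/
/-!
For `p ∤ n` the finite fixed points of `x ↦ x ^ m ^ n` are `0` and the `(m ^ n - 1)`-th roots of
unity. Frobenius is injective, so there are as many of those as the prime-to-`p` part of
`m ^ n - 1`, giving `f n = 2 + (m ^ n - 1) p ^ (-v)` with `v = v_p (m ^ n - 1)`. If `p ∣ m` then
`v = 0`. Otherwise `v = 0` unless `s ∣ n`, and then lifting the exponent (`p` odd, `p ∤ n`) gives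
`v = e`. So `f n = 1 + m ^ n + [s ∣ n] (p ^ (-e) - 1) (m ^ n - 1)`, and the tame series is a
combination of the tame logarithmic series `∑_{p ∤ n} w ^ n / n = log ζ*_pt(w)` at `w = m z` and
`w = z`, and of the same series restricted to `s ∣ n`. As `p ∤ s`, the restricted series is
`(1 / s) log ζ*_pt(w ^ s)`.
-/

open Real

theorem pow_expChar_pow_mul_eq_one_iff {R : Type*} [CommRing R] [IsReduced R] (p : ℕ)
    [ExpChar R p] (e Q : ℕ) (x : R) : x ^ (p ^ e * Q) = 1 ↔ x ^ Q = 1 := by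
  simpa [iterateFrobenius_def, ← pow_mul, mul_comm] using
    (iterateFrobenius_inj R p e).eq_iff (a := x ^ Q) (b := 1)

section AlgClosed

variable {K : Type*} [Field K] [IsAlgClosed K] (p : ℕ) [CharP K p]

theorem card_pow_eq_one_of_not_dvd {Q : ℕ} (hQ : ¬ p ∣ Q) :
    Nat.card {x : K // x ^ Q = 1} = Q := by
  have hQ0 : 0 < Q := Nat.pos_of_ne_zero fun h => hQ (h ▸ dvd_zero p)
  have : NeZero (Q : K) := ⟨by rwa [Ne, CharP.cast_eq_zero_iff K p]⟩
  obtain ⟨ζ, hζ⟩ := HasEnoughRootsOfUnity.exists_primitiveRoot K Q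
  calc Nat.card {x : K // x ^ Q = 1} = Nat.card (Polynomial.nthRootsFinset Q (1 : K)) :=
        Nat.card_congr (Equiv.subtypeEquivRight fun x =>
          (Polynomial.mem_nthRootsFinset hQ0 (1 : K)).symm)
    _ = Q := by rw [Nat.card_eq_finsetCard, hζ.card_nthRootsFinset]

theorem card_pow_eq_one (hp : p.Prime) {N : ℕ} (hN : N ≠ 0) :
    Nat.card {x : K // x ^ N = 1} = ordCompl[p] N := by
  have := Fact.mk hp
  rw [← card_pow_eq_one_of_not_dvd (K := K) p (Nat.not_dvd_ordCompl hp hN)]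
  refine Nat.card_congr (Equiv.subtypeEquivRight fun x => ?_)
  conv_lhs => rw [← Nat.ordProj_mul_ordCompl_eq_self N p]
  exact pow_expChar_pow_mul_eq_one_iff p _ _ x

theorem card_fixedPoints_pow_succ (hp : p.Prime) {N : ℕ} (hN : N ≠ 0) :
    Nat.card {x : K // x ^ (N + 1) = x} = ordCompl[p] N + 1 := by
  have hset : {x : K | x ^ (N + 1) = x} = insert 0 {x | x ^ N = 1} := by
    ext x
    by_cases hx : x = 0 <;> simp [hx, pow_succ, hN]
  have hfin : {x : K | x ^ N = 1}.Finite := Nat.finite_of_card_ne_zero <| by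
    rw [Set.coe_ofPred, card_pow_eq_one p hp hN]; exact (Nat.ordCompl_pos p hN).ne'
  change Nat.card {x : K | x ^ (N + 1) = x} = _
  rw [Nat.card_coe_set_eq, hset, Set.ncard_insert_of_notMem (by simp [hN]) hfin,
    ← Nat.card_coe_set_eq, Set.coe_ofPred, card_pow_eq_one p hp hN]

theorem card_fixedPoints_pow (hp : p.Prime) {M : ℕ} (hM : 1 < M) :
    (Nat.card {x : K // x ^ M = x} : ℝ) = 1 + (M - 1) / p ^ padicValNat p (M - 1) := by
  obtain ⟨N, rfl⟩ : ∃ N, M = N + 1 := ⟨M - 1, by omega⟩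
  rw [card_fixedPoints_pow_succ p hp (by omega), Nat.add_sub_cancel, ← Nat.factorization_def N hp,
    Nat.cast_add, Nat.cast_div (Nat.ordProj_dvd N p) (by simp [hp.ne_zero])]
  push_cast
  ring

end AlgClosed

theorem dvd_pow_sub_one_iff_orderOf_dvd {p m : ℕ} (hm : m ≠ 0) (n : ℕ) :
    p ∣ m ^ n - 1 ↔ orderOf (m : ZMod p) ∣ n := by
  rw [orderOf_dvd_iff_pow_eq_one, ← ZMod.natCast_eq_zero_iff,
    Nat.cast_sub (Nat.one_le_pow _ _ (Nat.pos_of_ne_zero hm)), Nat.cast_pow, Nat.cast_one,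
    sub_eq_zero]

theorem padicValNat_pow_sub_one_of_not_orderOf_dvd {p m n : ℕ} (hm : m ≠ 0)
    (h : ¬ orderOf (m : ZMod p) ∣ n) : padicValNat p (m ^ n - 1) = 0 :=
  padicValNat.eq_zero_of_not_dvd ((dvd_pow_sub_one_iff_orderOf_dvd hm n).not.mpr h)

theorem padicValNat_pow_sub_one_of_dvd {p m n : ℕ} (hp : p.Prime) (hm : m ≠ 0) (hpm : p ∣ m)
    (hn : n ≠ 0) : padicValNat p (m ^ n - 1) = 0 := by
  have := Fact.mk hp
  refine padicValNat_pow_sub_one_of_not_orderOf_dvd hm ?_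
  rwa [(ZMod.natCast_eq_zero_iff m p).mpr hpm, orderOf_zero, zero_dvd_iff]

theorem not_dvd_orderOf {p m : ℕ} (hp : p.Prime) (hpm : ¬ p ∣ m) :
    ¬ p ∣ orderOf (m : ZMod p) := by
  have := Fact.mk hp
  have hm : (m : ZMod p) ≠ 0 := by rwa [Ne, ZMod.natCast_eq_zero_iff]
  intro h
  have := Nat.eq_zero_of_dvd_of_lt (h.trans (ZMod.orderOf_dvd_card_sub_one hm))
    (Nat.sub_lt hp.pos one_pos)
  have := hp.two_le
  omega

theorem padicValNat_pow_sub_one_of_orderOf_dvd {p m n : ℕ} (hp : p.Prime) (hp2 : p ≠ 2)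
    (hm : 1 < m) (hpm : ¬ p ∣ m) (hs : orderOf (m : ZMod p) ∣ n) (hpn : ¬ p ∣ n) :
    padicValNat p (m ^ n - 1) = padicValNat p (m ^ orderOf (m : ZMod p) - 1) := by
  have := Fact.mk hp
  obtain ⟨k, rfl⟩ := hs
  set s := orderOf (m : ZMod p)
  have hk : ¬ p ∣ k := fun h => hpn (h.mul_left s)
  have hs0 : s ≠ 0 := fun h => hpn (by simp [h])
  have hlte := padicValNat.pow_sub_pow (hp.odd_of_ne_two hp2) (x := m ^ s) (y := 1)
    (Nat.one_lt_pow hs0 hm)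
    (by simpa using (dvd_pow_sub_one_iff_orderOf_dvd (p := p) (by omega) s).mpr dvd_rfl)
    (fun h => hpm (hp.dvd_of_dvd_pow h)) (n := k) (fun h => hk (h ▸ dvd_zero p))
  rw [one_pow, ← pow_mul] at hlte
  rw [hlte, padicValNat.eq_zero_of_not_dvd hk, add_zero]

theorem hasSum_ite_dvd_iff {α : Type*} [AddCommMonoid α] [TopologicalSpace α] {s : ℕ}
    (hs : s ≠ 0) {g : ℕ → α} {a : α} :
    HasSum (fun n => if s ∣ n then g n else 0) a ↔ HasSum (fun k => g (s * k)) a := by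
  rw [← (mul_right_injective₀ hs).hasSum_iff]
  · simp [Function.comp_def]
  · rintro n hn
    rw [if_neg]
    rintro ⟨k, rfl⟩
    exact hn ⟨k, rfl⟩

-- The `n = 0` term is the junk value `1 / 0 = 0`.
theorem hasSum_pow_div_log {w : ℝ} (hw : |w| < 1) :
    HasSum (fun n : ℕ => w ^ n / n) (-log (1 - w)) := by
  rw [← hasSum_nat_add_iff' 1]
  simpa using hasSum_pow_div_log_of_abs_lt_one hw

theorem abs_pow_lt_one {w : ℝ} (hw : |w| < 1) {n : ℕ} (hn : n ≠ 0) : |w ^ n| < 1 := by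
  rw [abs_pow]
  exact pow_lt_one₀ (abs_nonneg w) hw hn

noncomputable def tameTerm (p : ℕ) (w : ℝ) (n : ℕ) : ℝ := if ¬ p ∣ n then w ^ n / n else 0

noncomputable def tameLog (p : ℕ) (w : ℝ) : ℝ := (p : ℝ)⁻¹ * log (1 - w ^ p) - log (1 - w)

noncomputable def tameZetaPt (p : ℕ) (w : ℝ) : ℝ := (1 - w ^ p) ^ (p : ℝ)⁻¹ / (1 - w)

section TameSeries

variable {p : ℕ} {w : ℝ}

theorem hasSum_tameTerm (hp : p ≠ 0) (hw : |w| < 1) : HasSum (tameTerm p w) (tameLog p w) := by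
  have hmultiples : HasSum (fun n : ℕ => if p ∣ n then w ^ n / n else 0)
      ((p : ℝ)⁻¹ * -log (1 - w ^ p)) := by
    rw [hasSum_ite_dvd_iff hp]
    refine ((hasSum_pow_div_log (abs_pow_lt_one hw hp)).mul_left (p : ℝ)⁻¹).congr_fun fun k => ?_
    rw [pow_mul, Nat.cast_mul]
    ring
  rw [show tameLog p w = -log (1 - w) - (p : ℝ)⁻¹ * -log (1 - w ^ p) by rw [tameLog]; ring]
  refine ((hasSum_pow_div_log hw).sub hmultiples).congr_fun fun n => ?_
  by_cases h : p ∣ n <;> simp [tameTerm, h]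

theorem hasSum_ite_dvd_tameTerm (hp : p.Prime) {s : ℕ} (hps : ¬ p ∣ s) (hw : |w| < 1) :
    HasSum (fun n => if s ∣ n then tameTerm p w n else 0) (tameLog p (w ^ s) / s) := by
  have hs : s ≠ 0 := by rintro rfl; exact hps (dvd_zero p)
  rw [hasSum_ite_dvd_iff hs]
  refine ((hasSum_tameTerm hp.ne_zero (abs_pow_lt_one hw hs)).div_const (s : ℝ)).congr_fun
    fun k => ?_
  simp only [tameTerm, hp.dvd_mul, hps, false_or, pow_mul, Nat.cast_mul]
  split_ifs <;> ring

theorem exp_tameLog (hp : p ≠ 0) (hw : |w| < 1) : exp (tameLog p w) = tameZetaPt p w := by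
  have h1 : 0 < 1 - w := by linarith [le_abs_self w]
  have h2 : 0 < 1 - w ^ p := by linarith [le_abs_self (w ^ p), abs_pow_lt_one hw hp]
  rw [tameLog, tameZetaPt, exp_sub, exp_log h1, rpow_def_of_pos h2, mul_comm]

end TameSeries

theorem exp_tsum_tame_eq {p m s : ℕ} (hp : p.Prime) (hps : ¬ p ∣ s) {f : ℕ → ℕ} {d z : ℝ}
    (hz : |z| < 1) (hmz : |m * z| < 1)
    (hf : ∀ n, ¬ p ∣ n → (f n : ℝ) = 2 + (m ^ n - 1) * if s ∣ n then d else 1) :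
    exp (∑' n : ℕ, if ¬ p ∣ n then (f n : ℝ) * z ^ n / n else 0) =
      tameZetaPt p (m * z) * tameZetaPt p z *
        (tameZetaPt p ((m * z) ^ s) / tameZetaPt p (z ^ s)) ^ ((d - 1) / s) := by
  have hs : s ≠ 0 := by rintro rfl; exact hps (dvd_zero p)
  have hterm : (fun n : ℕ => if ¬ p ∣ n then (f n : ℝ) * z ^ n / n else 0) = fun n =>
      tameTerm p (m * z) n + tameTerm p z n + (d - 1) *
        ((if s ∣ n then tameTerm p (m * z) n else 0) - if s ∣ n then tameTerm p z n else 0) := by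
    funext n
    by_cases hpn : p ∣ n
    · simp [tameTerm, hpn]
    · simp only [tameTerm, hpn, not_false_eq_true, if_true, hf n hpn, mul_pow]
      split_ifs <;> ring
  have hsum := ((hasSum_tameTerm hp.ne_zero hmz).add (hasSum_tameTerm hp.ne_zero hz)).add
    (((hasSum_ite_dvd_tameTerm hp hps hmz).sub (hasSum_ite_dvd_tameTerm hp hps hz)).mul_left
      (d - 1))
  rw [hterm, hsum.tsum_eq, exp_add, exp_add, exp_tameLog hp.ne_zero hmz,
    exp_tameLog hp.ne_zero hz, ← exp_tameLog hp.ne_zero (abs_pow_lt_one hmz hs),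
    ← exp_tameLog hp.ne_zero (abs_pow_lt_one hz hs), ← exp_sub, rpow_def_of_pos (exp_pos _),
    log_exp]
  congr 2
  ring

/-- Explicit computation of the tame zeta function of the power map x ↦ x^m on the
projective line over an algebraically closed field of characteristic p > 2. -/
theorem tame_zeta_power_map (p : ℕ) (hp : p.Prime) (hp2 : 2 < p)
    (K : Type*) [Field K] [IsAlgClosed K] [CharP K p]
    (m : ℕ) (hm : 2 ≤ m)
    (f : ℕ → ℕ) (hf : ∀ n : ℕ, f n = 1 + Nat.card {x : K // x ^ (m ^ n) = x})
    (zpt : ℝ → ℝ) (hzpt : ∀ w : ℝ, zpt w = (1 - w ^ p) ^ ((p : ℝ)⁻¹) / (1 - w)) :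
    ∀ z : ℝ, 0 < z → z < 1 / m →
      ((p ∣ m →
          Real.exp (∑' n : ℕ, if ¬ p ∣ n then (f n : ℝ) * z ^ n / n else 0)
            = zpt (m * z) * zpt z) ∧
       (¬ p ∣ m →
          Real.exp (∑' n : ℕ, if ¬ p ∣ n then (f n : ℝ) * z ^ n / n else 0)
            = zpt (m * z) * zpt z *
              (zpt ((m * z) ^ orderOf (m : ZMod p)) / zpt (z ^ orderOf (m : ZMod p))) ^
                (((p : ℝ) ^ (-(padicValNat p (m ^ orderOf (m : ZMod p) - 1) : ℝ)) - 1) /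
                  (orderOf (m : ZMod p) : ℝ)))) := by
  intro z hz hzm
  obtain rfl : zpt = tameZetaPt p := funext hzpt
  have hm0 : (0 : ℝ) < m := by positivity
  have hmz : |(m : ℝ) * z| < 1 := by
    rw [abs_of_pos (by positivity)]
    rwa [lt_div_iff₀ hm0, mul_comm] at hzm
  have hz1 : |z| < 1 := by
    rw [abs_of_pos hz]
    exact hzm.trans_le ((div_le_one hm0).mpr (by exact_mod_cast (by omega : 1 ≤ m)))
  have hfv (n : ℕ) (hn : ¬ p ∣ n) :
      (f n : ℝ) = 2 + (m ^ n - 1) / p ^ padicValNat p (m ^ n - 1) := by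
    have hn0 : n ≠ 0 := by rintro rfl; exact hn (dvd_zero p)
    rw [hf, Nat.cast_add, card_fixedPoints_pow p hp (Nat.one_lt_pow hn0 hm), Nat.cast_pow]
    ring
  refine ⟨fun hpm => ?_, fun hpm => ?_⟩
  · simpa using exp_tsum_tame_eq hp hp.not_dvd_one (d := 1) hz1 hmz fun n hn => by
      rw [hfv n hn, padicValNat_pow_sub_one_of_dvd hp (by omega) hpm (by rintro rfl; simp at hn)]
      simp
  · refine exp_tsum_tame_eq hp (not_dvd_orderOf hp hpm) hz1 hmz fun n hn => ?_
    rw [hfv n hn]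
    split_ifs with hsn
    · rw [padicValNat_pow_sub_one_of_orderOf_dvd hp hp2.ne' hm hpm hsn hn, rpow_neg (by positivity),
        rpow_natCast, div_eq_mul_inv]
    · rw [padicValNat_pow_sub_one_of_not_orderOf_dvd (by omega) hsn, pow_zero, div_one, mul_one]
end
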